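/- arXiv:2107.02697 — 5 statements merged into one kernel-verified Lean document; each statement's English description precedes it below -/
import Mathlib

section
/- The number of vertices of the level-n Hanoi towers Schreier graph H_n is 3^n; explicitly, the map w ↦ F_w(p_0) from words w ∈ {1,2,3}^n to V^H_n is a bijection, where F_w = F_{w_1} ∘ ⋯ ∘ F_{w_n}. -/
noncomputable section

abbrev Pt := ℝ × ℝ

def Fmap (p : Fin 3 → Pt) (j : Fin 3) (x : Pt) : Pt := midpoint ℝ x (p j)

/-- The centroid `p_0` of the triangle `p_1 p_2 p_3`. -/
def cent (p : Fin 3 → Pt) : Pt := (3 : ℝ)⁻¹ • (p 0 + p 1 + p 2)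

/-- `Fw w = F_{w_1} ∘ ⋯ ∘ F_{w_n}`. -/
def Fw (p : Fin 3 → Pt) : List (Fin 3) → Pt → Pt
  | [] => id
  | j :: w => Fmap p j ∘ Fw p w

/-- `V^H_0 = {p_0}`, `V^H_n = ∪_j F_j(V^H_{n-1})`. -/
def VHrec (p : Fin 3 → Pt) : ℕ → Set Pt
  | 0 => {cent p}
  | n + 1 => ⋃ j : Fin 3, Fmap p j '' VHrec p n

lemma Fmap_inj (p : Fin 3 → Pt) (j : Fin 3) : Function.Injective (Fmap p j) := by
  intro x y h
  simp only [Fmap, midpoint_eq_smul_add] at h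
  have := congrArg (fun z : Pt => (2 : ℝ) • z) h
  simp only [smul_smul] at this
  norm_num at this
  exact this

/-- An affine basis of the plane from three affinely independent points. -/
def triBasis (p : Fin 3 → Pt) (hp : AffineIndependent ℝ p) : AffineBasis (Fin 3) ℝ Pt :=
  ⟨p, hp, by
    rw [hp.affineSpan_eq_top_iff_card_eq_finrank_add_one]
    simp [Module.finrank_prod]⟩

lemma cent_eq_centroid (p : Fin 3 → Pt) :
    cent p = Finset.univ.centroid ℝ p := by
  rw [Finset.centroid_def,
    Finset.affineCombination_eq_linear_combination _ _ _ (by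
      simp [Finset.centroidWeights])]
  simp [cent, Finset.centroidWeights, Fin.sum_univ_three, smul_add, add_assoc]

lemma coord_cent (p : Fin 3 → Pt) (hp : AffineIndependent ℝ p) (j : Fin 3) :
    (triBasis p hp).coord j (cent p) = 3⁻¹ := by
  rw [cent_eq_centroid]
  have := (triBasis p hp).coord_apply_centroid (s := Finset.univ) (i := j)
    (Finset.mem_univ j)
  rw [show ⇑(triBasis p hp) = p from rfl] at this
  simpa [triBasis] using this

lemma coord_Fmap (p : Fin 3 → Pt) (hp : AffineIndependent ℝ p) (i j : Fin 3) (x : Pt) :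
    (triBasis p hp).coord j (Fmap p i x) =
      ((triBasis p hp).coord j x + if i = j then 1 else 0) / 2 := by
  have hm : (triBasis p hp).coord j (Fmap p i x) =
      midpoint ℝ ((triBasis p hp).coord j x) ((triBasis p hp).coord j (p i)) :=
    AffineMap.map_midpoint _ _ _
  have hb : (triBasis p hp).coord j (p i) = if i = j then 1 else 0 := by
    have : (triBasis p hp) i = p i := rfl
    rw [← this]
    rcases eq_or_ne i j with h | h
    · simp [h]
    · simp [(triBasis p hp).coord_apply, h, Ne.symm h]
  rw [hm, hb, midpoint_eq_smul_add]
  norm_num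
  ring

lemma coord_Fw_bounds (p : Fin 3 → Pt) (hp : AffineIndependent ℝ p) (w : List (Fin 3))
    (j : Fin 3) : 0 < (triBasis p hp).coord j (Fw p w (cent p)) ∧
      (triBasis p hp).coord j (Fw p w (cent p)) < 1 := by
  induction w with
  | nil => simp [Fw, coord_cent p hp j]; norm_num
  | cons i w ih =>
    have : Fw p (i :: w) (cent p) = Fmap p i (Fw p w (cent p)) := rfl
    rw [this, coord_Fmap]
    rcases eq_or_ne i j with h | h <;> simp [h] <;> constructor <;> linarith [ih.1, ih.2]

lemma coord_Fw_cons_gt (p : Fin 3 → Pt) (hp : AffineIndependent ℝ p) (i : Fin 3)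
    (w : List (Fin 3)) :
    (1:ℝ)/2 < (triBasis p hp).coord i (Fw p (i :: w) (cent p)) := by
  have : Fw p (i :: w) (cent p) = Fmap p i (Fw p w (cent p)) := rfl
  rw [this, coord_Fmap]
  simp
  linarith [(coord_Fw_bounds p hp w i).1]

lemma coord_Fw_cons_lt (p : Fin 3 → Pt) (hp : AffineIndependent ℝ p) (i j : Fin 3)
    (hij : i ≠ j) (w : List (Fin 3)) :
    (triBasis p hp).coord j (Fw p (i :: w) (cent p)) < 1/2 := by
  have : Fw p (i :: w) (cent p) = Fmap p i (Fw p w (cent p)) := rfl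
  rw [this, coord_Fmap]
  simp [hij]
  linarith [(coord_Fw_bounds p hp w j).2]

lemma Fw_inj (p : Fin 3 → Pt) (hp : AffineIndependent ℝ p) :
    ∀ w w' : List (Fin 3), w.length = w'.length →
      Fw p w (cent p) = Fw p w' (cent p) → w = w' := by
  intro w
  induction w with
  | nil => intro w' hl _; exact (List.length_eq_zero_iff.mp hl.symm).symm
  | cons i w ih =>
    intro w' hl he
    match w' with
    | [] => simp at hl
    | i' :: w' =>
      have hii' : i = i' := by
        by_contra h
        have h1 := coord_Fw_cons_gt p hp i w
        have h2 := coord_Fw_cons_lt p hp i' i (Ne.symm h) w'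
        rw [he] at h1
        linarith
      subst hii'
      have hw : Fw p w (cent p) = Fw p w' (cent p) :=
        Fmap_inj p i he
      have := ih w' (by simpa using hl) hw
      rw [this]

lemma range_Fw (p : Fin 3 → Pt) (n : ℕ) :
    Set.range (fun w : Fin n → Fin 3 => Fw p (List.ofFn w) (cent p)) = VHrec p n := by
  induction n with
  | zero =>
    ext x
    simp only [VHrec, Set.mem_range, Set.mem_singleton_iff]
    constructor
    · rintro ⟨w, rfl⟩; rfl
    · rintro rfl; exact ⟨Fin.elim0, rfl⟩
  | succ n ih =>
    ext x
    simp only [VHrec, Set.mem_iUnion, Set.mem_image, ← ih, Set.mem_range]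
    constructor
    · rintro ⟨w, rfl⟩
      refine ⟨w 0, Fw p (List.ofFn (fun i => w i.succ)) (cent p),
        ⟨fun i => w i.succ, rfl⟩, ?_⟩
      rw [List.ofFn_succ]
      rfl
    · rintro ⟨j, _, ⟨w, rfl⟩, rfl⟩
      exact ⟨Fin.cons j w, by rw [List.ofFn_succ]; simp [Fw]⟩

/-- The map `w ↦ F_w(p_0)` from words of length `n` to `V^H_n` is a bijection;
in particular `H_n` has `3^n` vertices. -/
theorem card_VH (p : Fin 3 → Pt) (hp : AffineIndependent ℝ p) (n : ℕ) :
    Function.Injective (fun w : Fin n → Fin 3 => Fw p (List.ofFn w) (cent p)) ∧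
    Set.range (fun w : Fin n → Fin 3 => Fw p (List.ofFn w) (cent p)) = VHrec p n ∧
    Nat.card (VHrec p n) = 3 ^ n := by
  have hinj : Function.Injective
      (fun w : Fin n → Fin 3 => Fw p (List.ofFn w) (cent p)) := by
    intro w v h
    exact List.ofFn_injective (Fw_inj p hp (List.ofFn w) (List.ofFn v) (by simp) h)
  refine ⟨hinj, range_Fw p n, ?_⟩
  rw [← range_Fw p n, Nat.card_range_of_injective hinj]
  simp [Nat.card_eq_fintype_card]
end
end

section
/- If z ∉ {−3/2, −3/4, −1/2} and f is an eigenfunction of the star-graph-Γ_3 Laplacian relation, i.e., if R_3(z) = (3/2)(z^2+2z) is an eigenvalue of the Laplacian Δ^G_n on the Sierpinski gasket graph G_n with eigenfunction f̃, then extending f̃ to V^J_n by setting f(x) = (1/(3(1+z))) Σ_{y ∼_{J_n} x} f̃(y) at each x ∈ V^H_n gives an eigenfunction of Δ^J_n with eigenvalue z. -/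
noncomputable section
attribute [local instance] Classical.propDecidable

def VG (p : Fin 3 → Pt) (n : ℕ) : Set Pt :=
  {x | ∃ w : List (Fin 3), w.length = n ∧ ∃ j : Fin 3, x = Fw p w (p j)}

def VH (p : Fin 3 → Pt) (n : ℕ) : Set Pt :=
  {x | ∃ w : List (Fin 3), w.length = n ∧ x = Fw p w (cent p)}

def VJ (p : Fin 3 → Pt) (n : ℕ) : Set Pt := VG p n ∪ VH p n

def adjG (p : Fin 3 → Pt) (n : ℕ) (x y : Pt) : Prop :=
  x ≠ y ∧ ∃ w : List (Fin 3), w.length = n ∧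
    ∃ j k : Fin 3, x = Fw p w (p j) ∧ y = Fw p w (p k)

def adjJ (p : Fin 3 → Pt) (n : ℕ) (x y : Pt) : Prop :=
  ∃ w : List (Fin 3), w.length = n ∧ ∃ j : Fin 3,
    ((x = Fw p w (cent p) ∧ y = Fw p w (p j)) ∨
     (y = Fw p w (cent p) ∧ x = Fw p w (p j)))

def adjH (p : Fin 3 → Pt) (n : ℕ) (x y : Pt) : Prop :=
  x ≠ y ∧ x ∈ VH p n ∧ y ∈ VH p n ∧ ∃ z : Pt, adjJ p n x z ∧ adjJ p n y z

/-- Graph Laplacian of the Sierpinski gasket graph `G_n`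
(degree 2 at the three corners, 4 elsewhere). -/
def lapG (p : Fin 3 → Pt) (n : ℕ) (f : Pt → ℝ) (x : Pt) : ℝ :=
  (if x ∈ Set.range p then (2:ℝ) else 4)⁻¹ * ∑ᶠ y ∈ {y | adjG p n x y}, (f y - f x)

/-- Graph Laplacian of the subdivision graph `J_n`
(degree 1 at the three corners, 3 at the centers `V^H_n`, 2 elsewhere). -/
def lapJ (p : Fin 3 → Pt) (n : ℕ) (f : Pt → ℝ) (x : Pt) : ℝ :=
  (if x ∈ Set.range p then (1:ℝ) else if x ∈ VH p n then 3 else 2)⁻¹ *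
    ∑ᶠ y ∈ {y | adjJ p n x y}, (f y - f x)

/-- Graph Laplacian of the Hanoi graph `H_n`; it is 3-regular with loops at the
three corners, and a loop contributes `f x - f x = 0` to the sum. -/
def lapH (p : Fin 3 → Pt) (n : ℕ) (f : Pt → ℝ) (x : Pt) : ℝ :=
  (3:ℝ)⁻¹ * ∑ᶠ y ∈ {y | adjH p n x y}, (f y - f x)


namespace SGaux

def ev (j i : Fin 3) : ℕ := if i = j then 1 else 0
def wv : List (Fin 3) → Fin 3 → ℕ
  | [], _ => 0
  | a :: w, i => wv w i + 2 ^ w.length * ev a i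
@[simp] lemma ev_self (j : Fin 3) : ev j j = 1 := by simp [ev]
lemma ev_ne {i j : Fin 3} (h : i ≠ j) : ev j i = 0 := by simp [ev, h]
lemma ev_le_one (j i : Fin 3) : ev j i ≤ 1 := by unfold ev; split <;> omega
lemma ev_eq_one {j i : Fin 3} (h : ev j i = 1) : i = j := by
  by_contra hc; rw [ev_ne hc] at h; omega
@[simp] lemma wv_nil (i : Fin 3) : wv [] i = 0 := rfl
@[simp] lemma wv_cons (a : Fin 3) (w : List (Fin 3)) (i : Fin 3) :
    wv (a :: w) i = wv w i + 2 ^ w.length * ev a i := rfl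
lemma ev_sum (j : Fin 3) : ∑ i, ev j i = 1 := by
  fin_cases j <;> simp [Fin.sum_univ_three, ev]
lemma wv_sum (w : List (Fin 3)) : (∑ i, wv w i) + 1 = 2 ^ w.length := by
  induction w with
  | nil => simp
  | cons a w ih =>
    simp only [wv_cons, Finset.sum_add_distrib, ← Finset.mul_sum, ev_sum,
      List.length_cons]
    rw [mul_one]; omega
lemma wv_lt (w : List (Fin 3)) (i : Fin 3) : wv w i < 2 ^ w.length := by
  induction w with
  | nil => simp
  | cons a w ih =>
    have := ev_le_one a i
    simp only [wv_cons, List.length_cons, pow_succ]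
    nlinarith [ih]
lemma wv_single (w : List (Fin 3)) (c : Fin 3) (h : ∀ i, i ≠ c → wv w i = 0) :
    w = List.replicate w.length c := by
  induction w with
  | nil => simp
  | cons a w ih =>
    have hac : a = c := by
      by_contra hac
      have := h a hac
      simp only [wv_cons, ev_self] at this
      have : (0:ℕ) < 2 ^ w.length := Nat.pow_pos (by norm_num)
      omega
    subst hac
    have : w = List.replicate w.length a := by
      refine ih (fun i hi => ?_)
      have := h i hi
      rw [wv_cons, ev_ne hi] at this
      omega
    rw [List.length_cons, List.replicate_succ, ← this]
lemma wv_replicate (t : ℕ) (j i : Fin 3) :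
    wv (List.replicate t j) i = (2 ^ t - 1) * ev j i := by
  induction t with
  | zero => simp
  | succ t ih =>
    rw [List.replicate_succ, wv_cons, ih, List.length_replicate]
    have : (0:ℕ) < 2 ^ t := Nat.pow_pos (by norm_num)
    cases Nat.le_one_iff_eq_zero_or_eq_one.mp (ev_le_one j i) with
    | inl h => rw [h]; ring
    | inr h => rw [h]; simp [pow_succ]; omega
lemma wv_append (u v : List (Fin 3)) (i : Fin 3) :
    wv (u ++ v) i = 2 ^ v.length * wv u i + wv v i := by
  induction u with
  | nil => simp
  | cons a u ih =>
    simp only [List.cons_append, wv_cons, ih, List.length_append, List.length_cons]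
    rw [pow_add]; ring

lemma wv_full {w : List (Fin 3)} {c : Fin 3} (h : wv w c + 1 = 2 ^ w.length) :
    w = List.replicate w.length c := by
  apply wv_single
  intro i hi
  have hs := wv_sum w
  have herase := Finset.sum_erase_add Finset.univ (wv w) (Finset.mem_univ c)
  have hzero : ∑ x ∈ Finset.univ.erase c, wv w x = 0 := by omega
  have := (Finset.sum_eq_zero_iff).mp hzero i (Finset.mem_erase.mpr ⟨hi, Finset.mem_univ i⟩)
  exact this

lemma classify : ∀ {w w' : List (Fin 3)}, w.length = w'.length → ∀ {j j' : Fin 3},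
    (∀ i, wv w i + ev j i = wv w' i + ev j' i) →
    (w = w' ∧ j = j') ∨
      (j ≠ j' ∧ ∃ u t, w = u ++ j' :: List.replicate t j ∧
        w' = u ++ j :: List.replicate t j') := by
  intro w
  induction w with
  | nil =>
    intro w' hlen j j' h
    have hw' : w' = [] := List.length_eq_zero_iff.mp hlen.symm
    subst hw'
    have := h j
    simp only [wv_nil, zero_add, ev_self] at this
    exact Or.inl ⟨rfl, ev_eq_one this.symm⟩
  | cons a v ih =>
    intro w' hlen j j' h
    cases w' with
    | nil => simp at hlen
    | cons a' v' =>
      simp only [List.length_cons, Nat.succ_inj] at hlen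
      by_cases haa : a = a'
      · subst haa
        have h2 : ∀ i, wv v i + ev j i = wv v' i + ev j' i := by
          intro i
          have := h i
          rw [wv_cons, wv_cons, hlen] at this
          omega
        rcases ih hlen h2 with ⟨hv, hj⟩ | ⟨hjj, u, t, hu, hu'⟩
        · exact Or.inl ⟨by rw [hv], hj⟩
        · exact Or.inr ⟨hjj, a :: u, t, by rw [hu, List.cons_append],
            by rw [hu', List.cons_append]⟩
      · have ha := h a
        have ha' := h a'
        simp only [wv_cons] at ha ha'
        rw [hlen, ev_self, ev_ne haa] at ha
        rw [hlen, ev_self, ev_ne (Ne.symm haa)] at ha'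
        have hlt1 := wv_lt v' a
        have hlt2 := wv_lt v a'
        have hb1 := ev_le_one j a
        have hb2 := ev_le_one j' a
        have hb3 := ev_le_one j a'
        have hb4 := ev_le_one j' a'
        rw [hlen] at hlt2
        have hj'a : ev j' a = 1 := by omega
        have hja' : ev j a' = 1 := by omega
        have hv'full : wv v' a + 1 = 2 ^ v'.length := by omega
        have hvfull : wv v a' + 1 = 2 ^ v.length := by rw [hlen]; omega
        have hja : a = j' := ev_eq_one hj'a
        have hja2 : a' = j := ev_eq_one hja'
        have hv' := wv_full hv'full
        have hv2 := wv_full hvfull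
        refine Or.inr ⟨?_, [], v.length, ?_, ?_⟩
        · rw [← hja, ← hja2]; exact Ne.symm haa
        · rw [List.nil_append, ← hja, ← hja2, ← hv2]
        · rw [List.nil_append, ← hja, ← hja2, hlen, ← hv']


-- run uniqueness
lemma run_unique_rev : ∀ (t t' : ℕ) (xs ys : List (Fin 3)) (l l' j : Fin 3), l ≠ j → l' ≠ j →
    List.replicate t j ++ l :: xs = List.replicate t' j ++ l' :: ys →
    t = t' ∧ l = l' ∧ xs = ys := by
  intro t
  induction t with
  | zero =>
    intro t' xs ys l l' j hl hl' h
    cases t' with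
    | zero =>
      simp only [List.replicate, List.nil_append, List.cons.injEq] at h
      exact ⟨rfl, h.1, h.2⟩
    | succ t' =>
      rw [List.replicate_succ] at h
      simp only [List.replicate_zero, List.nil_append, List.cons_append,
        List.cons.injEq] at h
      exact absurd h.1 hl
  | succ t ih =>
    intro t' xs ys l l' j hl hl' h
    cases t' with
    | zero =>
      rw [List.replicate_succ] at h
      simp only [List.replicate_zero, List.nil_append, List.cons_append,
        List.cons.injEq] at h
      exact absurd h.1.symm hl'
    | succ t' =>
      rw [List.replicate_succ, List.replicate_succ] at h
      simp only [List.cons_append, List.cons.injEq] at h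
      obtain ⟨ht, hll, hxy⟩ := ih t' xs ys l l' j hl hl' h.2
      exact ⟨by omega, hll, hxy⟩

lemma run_unique {u u' : List (Fin 3)} {l l' j : Fin 3} {t t' : ℕ}
    (hl : l ≠ j) (hl' : l' ≠ j)
    (h : u ++ l :: List.replicate t j = u' ++ l' :: List.replicate t' j) :
    u = u' ∧ l = l' ∧ t = t' := by
  have hrev := congrArg List.reverse h
  simp only [List.reverse_append, List.reverse_cons, List.reverse_replicate,
    List.append_assoc, List.singleton_append] at hrev
  obtain ⟨ht, hll, huu⟩ := run_unique_rev t t' u.reverse u'.reverse l l' j hl hl' hrev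
  exact ⟨List.reverse_injective huu, hll, ht⟩

lemma decomp (w : List (Fin 3)) (j : Fin 3) :
    w = List.replicate w.length j ∨
      ∃ u l t, l ≠ j ∧ w = u ++ l :: List.replicate t j := by
  induction w with
  | nil => exact Or.inl rfl
  | cons a v ih =>
    rcases ih with hv | ⟨u, l, t, hl, hu⟩
    · by_cases haj : a = j
      · subst haj
        exact Or.inl (by rw [List.length_cons, List.replicate_succ, ← hv])
      · exact Or.inr ⟨[], a, v.length, haj, by rw [List.nil_append, ← hv]⟩
    · exact Or.inr ⟨a :: u, l, t, hl, by rw [hu, List.cons_append]⟩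

-- geometry
variable {p : Fin 3 → Pt}

lemma ev_smul_sum (a : Fin 3) : ∑ i, (ev a i : ℝ) • p i = p a := by
  fin_cases a <;> simp [Fin.sum_univ_three, ev]

lemma smul_aux (L : ℕ) (v w : Pt) :
    (2:ℝ)⁻¹ • ((2^L:ℝ)⁻¹ • v + w) = ((2^(L+1):ℝ))⁻¹ • (v + (2^L:ℝ) • w) := by
  match_scalars <;> (field_simp; ring)

lemma Fw_eq (p : Fin 3 → Pt) (w : List (Fin 3)) (x : Pt) :
    Fw p w x = (2 ^ w.length : ℝ)⁻¹ • (x + ∑ i, (wv w i : ℝ) • p i) := by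
  induction w with
  | nil => simp [Fw]
  | cons a w ih =>
    have hmid : Fw p (a :: w) x = midpoint ℝ (Fw p w x) (p a) := rfl
    rw [hmid, midpoint_eq_smul_add, invOf_eq_inv, ih]
    have hsum : ∑ i, (wv (a :: w) i : ℝ) • p i =
        (∑ i, (wv w i : ℝ) • p i) + (2 ^ w.length : ℝ) • p a := by
      rw [← ev_smul_sum (p := p) a, Finset.smul_sum, ← Finset.sum_add_distrib]
      refine Finset.sum_congr rfl fun i _ => ?_
      rw [wv_cons, smul_smul, ← add_smul]
      push_cast
      ring_nf
    rw [List.length_cons, hsum, ← add_assoc, smul_aux]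

lemma key (hp : AffineIndependent ℝ p) {c d : Fin 3 → ℝ}
    (hsum : ∑ i, c i = ∑ i, d i) (h : ∑ i, c i • p i = ∑ i, d i • p i) :
    ∀ i, c i = d i := fun i =>
  hp.eq_of_sum_eq_sum hsum h i (Finset.mem_univ i)

lemma repr_corner (p : Fin 3 → Pt) (w : List (Fin 3)) (j : Fin 3) :
    p j + ∑ i, (wv w i : ℝ) • p i = ∑ i, ((wv w i + ev j i : ℕ) : ℝ) • p i := by
  push_cast
  simp only [add_smul, Finset.sum_add_distrib, ev_smul_sum]
  exact add_comm _ _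

lemma cent_repr (p : Fin 3 → Pt) : cent p = ∑ i, (3⁻¹ : ℝ) • p i := by
  simp [cent, Fin.sum_univ_three, smul_add]

lemma cv_sum (w : List (Fin 3)) (j : Fin 3) :
    ∑ i, (wv w i + ev j i) = 2 ^ w.length := by
  rw [Finset.sum_add_distrib, ev_sum]
  have := wv_sum w
  omega

lemma smul_cancel {L : ℕ} {A B : Pt} (h : (2 ^ L : ℝ)⁻¹ • A = (2 ^ L : ℝ)⁻¹ • B) :
    A = B := by
  have hne : ((2 ^ L : ℝ))⁻¹ ≠ 0 := by positivity
  exact smul_right_injective Pt hne h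

lemma corner_eq_iff (hp : AffineIndependent ℝ p) {w w' : List (Fin 3)}
    (hlen : w.length = w'.length) {j j' : Fin 3} :
    Fw p w (p j) = Fw p w' (p j') ↔ ∀ i, wv w i + ev j i = wv w' i + ev j' i := by
  rw [Fw_eq, Fw_eq, hlen]
  constructor
  · intro h
    have h2 := smul_cancel h
    rw [repr_corner, repr_corner] at h2
    have hs : ∑ i, ((wv w i + ev j i : ℕ) : ℝ) = ∑ i, ((wv w' i + ev j' i : ℕ) : ℝ) := by
      push_cast
      rw_mod_cast [cv_sum, cv_sum, hlen]
    have := key hp hs h2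
    intro i
    exact_mod_cast this i
  · intro h
    congr 1
    rw [repr_corner, repr_corner]
    refine Finset.sum_congr rfl fun i _ => ?_
    rw [h i]

lemma wv_inj {w w' : List (Fin 3)} (hlen : w.length = w'.length)
    (h : ∀ i, wv w i = wv w' i) : w = w' := by
  rcases classify hlen (j := 0) (j' := 0) (fun i => by rw [h i]) with ⟨h1, _⟩ | ⟨hjj, _⟩
  · exact h1
  · exact absurd rfl hjj

lemma cent_eq_iff (hp : AffineIndependent ℝ p) {w w' : List (Fin 3)}
    (hlen : w.length = w'.length) :
    Fw p w (cent p) = Fw p w' (cent p) ↔ w = w' := by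
  constructor
  · intro h
    rw [Fw_eq, Fw_eq, hlen] at h
    have h2 := smul_cancel h
    have h3 : ∑ i, ((3:ℝ)⁻¹ + (wv w i : ℝ)) • p i
        = ∑ i, ((3:ℝ)⁻¹ + (wv w' i : ℝ)) • p i := by
      simpa only [cent_repr, add_smul, Finset.sum_add_distrib] using h2
    have hN : ∑ i, wv w i = ∑ i, wv w' i := by
      have h1 := wv_sum w
      have h2 := wv_sum w'
      rw [hlen] at h1
      omega
    have hs : ∑ i, ((3:ℝ)⁻¹ + (wv w i : ℝ)) = ∑ i, ((3:ℝ)⁻¹ + (wv w' i : ℝ)) := by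
      rw [Finset.sum_add_distrib, Finset.sum_add_distrib]
      congr 1
      exact_mod_cast congrArg (Nat.cast : ℕ → ℝ) hN
    have hk := key hp hs h3
    refine wv_inj hlen fun i => ?_
    have := hk i
    have : (wv w i : ℝ) = (wv w' i : ℝ) := by linarith
    exact_mod_cast this
  · intro h; rw [h]

lemma corner_ne_cent (hp : AffineIndependent ℝ p) {w w' : List (Fin 3)}
    (hlen : w.length = w'.length) (j : Fin 3) :
    Fw p w (p j) ≠ Fw p w' (cent p) := by
  intro h
  rw [Fw_eq, Fw_eq, hlen] at h
  have h2 := smul_cancel h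
  rw [repr_corner] at h2
  have h3 : ∑ i, ((wv w i + ev j i : ℕ) : ℝ) • p i
      = ∑ i, ((3:ℝ)⁻¹ + (wv w' i : ℝ)) • p i := by
    simpa only [cent_repr, add_smul, Finset.sum_add_distrib] using h2
  have hN1 := wv_sum w
  have hN2 := wv_sum w'
  rw [hlen] at hN1
  have hs : ∑ i, ((wv w i + ev j i : ℕ) : ℝ) = ∑ i, ((3:ℝ)⁻¹ + (wv w' i : ℝ)) := by
    rw [Finset.sum_add_distrib]
    have hl : ∑ i, ((wv w i + ev j i : ℕ) : ℝ) = ((2 : ℝ) ^ w'.length) := by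
      rw_mod_cast [cv_sum, hlen]
    have hr : ∑ i, ((wv w' i : ℝ)) = (2:ℝ) ^ w'.length - 1 := by
      have : ((∑ i, wv w' i : ℕ) : ℝ) + 1 = ((2 ^ w'.length : ℕ) : ℝ) := by
        exact_mod_cast congrArg (Nat.cast : ℕ → ℝ) hN2
      push_cast at this ⊢
      linarith
    rw [hl, hr, Fin.sum_univ_three]
    norm_num
  have hk := key hp hs h3
  have h0 := hk 0
  have : ((3 : ℝ)) * ((wv w 0 + ev j 0 : ℕ) : ℝ) = 1 + 3 * (wv w' 0 : ℝ) := by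
    rw [h0]; ring_nf
  have hNat : 3 * (wv w 0 + ev j 0) = 1 + 3 * wv w' 0 := by exact_mod_cast this
  omega

lemma Fw_replicate (p : Fin 3 → Pt) (n : ℕ) (j : Fin 3) :
    Fw p (List.replicate n j) (p j) = p j := by
  induction n with
  | zero => rfl
  | succ n ih =>
    rw [List.replicate_succ]
    show Fmap p j (Fw p (List.replicate n j) (p j)) = p j
    rw [ih, Fmap, midpoint_self]

variable {p : Fin 3 → Pt}

lemma point_eq_cases (hp : AffineIndependent ℝ p) {w w' : List (Fin 3)}
    (hlen : w.length = w'.length) {j j' : Fin 3}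
    (h : Fw p w (p j) = Fw p w' (p j')) :
    (w = w' ∧ j = j') ∨ (j ≠ j' ∧ ∃ u t, w = u ++ j' :: List.replicate t j ∧
      w' = u ++ j :: List.replicate t j') :=
  classify hlen ((corner_eq_iff hp hlen).mp h)

lemma rep_of_pi (hp : AffineIndependent ℝ p) {w : List (Fin 3)} {i j : Fin 3}
    (h : p i = Fw p w (p j)) : w = List.replicate w.length i ∧ j = i := by
  have hrep : Fw p (List.replicate w.length i) (p i) = Fw p w (p j) := by
    rw [Fw_replicate]; exact h
  have hlen : (List.replicate w.length i).length = w.length := List.length_replicate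
  rcases point_eq_cases hp hlen hrep with ⟨h1, h2⟩ | ⟨hne, v, s, hA, hB⟩
  · refine ⟨?_, h2.symm⟩
    rw [← h1, List.length_replicate]
  · exfalso
    have : j ∈ List.replicate w.length i := by
      rw [hA]
      exact List.mem_append_right _ (List.mem_cons_self)
    exact hne (List.eq_of_mem_replicate this).symm

lemma cv_special (u : List (Fin 3)) (l j : Fin 3) (t : ℕ) (i : Fin 3) :
    wv (u ++ l :: List.replicate t j) i + ev j i
      = 2 ^ (t + 1) * wv u i + 2 ^ t * ev l i + 2 ^ t * ev j i := by
  rw [wv_append, wv_cons, wv_replicate, List.length_cons, List.length_replicate]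
  have hP : 1 ≤ 2 ^ t := Nat.one_le_two_pow
  rcases Nat.le_one_iff_eq_zero_or_eq_one.mp (ev_le_one j i) with h | h <;> rw [h]
  · simp
  · simp only [mul_one]
    generalize 2 ^ (t + 1) * wv u i = A
    generalize 2 ^ t * ev l i = C
    generalize 2 ^ t = P at *
    omega

lemma two_cells_eq (hp : AffineIndependent ℝ p) (u : List (Fin 3)) {l j : Fin 3}
    (t : ℕ) :
    Fw p (u ++ l :: List.replicate t j) (p j) = Fw p (u ++ j :: List.replicate t l) (p l) := by
  refine (corner_eq_iff hp (by simp)).mpr fun i => ?_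
  rw [cv_special, cv_special]
  ring

lemma reps_of_two (hp : AffineIndependent ℝ p) {u w' : List (Fin 3)} {l j j' : Fin 3}
    {t : ℕ} (hl : l ≠ j)
    (hlen' : w'.length = (u ++ l :: List.replicate t j).length)
    (h : Fw p w' (p j') = Fw p (u ++ l :: List.replicate t j) (p j)) :
    (w' = u ++ l :: List.replicate t j ∧ j' = j) ∨
      (w' = u ++ j :: List.replicate t l ∧ j' = l) := by
  rcases point_eq_cases hp hlen' h with ⟨h1, h2⟩ | ⟨hne, v, s, hA, hB⟩
  · exact Or.inl ⟨h1, h2⟩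
  · obtain ⟨huv, hlj', hts⟩ := run_unique hl hne hB
    subst huv hlj' hts
    exact Or.inr ⟨hA, rfl⟩

-- distinctness
lemma corner_ne_same (hp : AffineIndependent ℝ p) {w : List (Fin 3)} {j k : Fin 3}
    (hjk : j ≠ k) : Fw p w (p j) ≠ Fw p w (p k) := by
  intro h
  rcases point_eq_cases hp rfl h with ⟨_, h2⟩ | ⟨hne, v, s, hA, hB⟩
  · exact hjk h2
  · have := hA.symm.trans hB
    have := List.append_cancel_left this
    simp only [List.cons.injEq] at this
    exact hne this.1.symm

lemma corner_ne_cross (hp : AffineIndependent ℝ p) {u : List (Fin 3)} {l j k k' : Fin 3}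
    {t : ℕ} (hl : l ≠ j) (hk : k ≠ j) (hk' : k' ≠ l) :
    Fw p (u ++ l :: List.replicate t j) (p k) ≠ Fw p (u ++ j :: List.replicate t l) (p k') := by
  intro h
  have hcv := (corner_eq_iff hp (by simp)).mp h
  have hj := hcv j
  have e1 : ev j j = 1 := ev_self j
  have e2 : ev l j = 0 := ev_ne (Ne.symm hl)
  have e3 : ev k j = 0 := ev_ne (Ne.symm hk)
  rw [wv_append, wv_append, wv_cons, wv_cons, wv_replicate, wv_replicate,
    List.length_cons, List.length_cons, List.length_replicate,
    List.length_replicate] at hj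
  simp only [e1, e2, e3, mul_one, mul_zero, add_zero, zero_add] at hj
  have hkj' : ev k' j ≤ 1 := ev_le_one _ _
  have hP : 1 ≤ 2 ^ t := Nat.one_le_two_pow
  generalize 2 ^ (t + 1) * wv u j = A at hj
  generalize hg : 2 ^ t = P at *
  omega

-- non-membership facts
lemma not_range_of_two (hp : AffineIndependent ℝ p) {u : List (Fin 3)} {l j : Fin 3}
    {t : ℕ} (hl : l ≠ j) :
    Fw p (u ++ l :: List.replicate t j) (p j) ∉ Set.range p := by
  rintro ⟨i, hi⟩
  obtain ⟨hw, hj⟩ := rep_of_pi hp hi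
  subst hj
  have : l ∈ u ++ l :: List.replicate t j := List.mem_append_right _ (List.mem_cons_self)
  rw [hw] at this
  exact hl (List.eq_of_mem_replicate this)

lemma G_not_in_VH (hp : AffineIndependent ℝ p) {n : ℕ} {w : List (Fin 3)} {j : Fin 3}
    (hlen : w.length = n) : Fw p w (p j) ∉ VH p n := by
  rintro ⟨w', hlen', heq⟩
  exact corner_ne_cent hp (hlen.trans hlen'.symm) j heq

lemma cent_not_range (hp : AffineIndependent ℝ p) {n : ℕ} {w : List (Fin 3)}
    (hlen : w.length = n) : Fw p w (cent p) ∉ Set.range p := by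
  rintro ⟨i, hi⟩
  rw [← Fw_replicate p n i] at hi
  exact corner_ne_cent hp (by rw [List.length_replicate, hlen]) i hi

-- adjacency sums
lemma sumJ_cent (hp : AffineIndependent ℝ p) {n : ℕ} {w : List (Fin 3)}
    (hlen : w.length = n) (g : Pt → ℝ) :
    ∑ᶠ y ∈ {y | adjJ p n (Fw p w (cent p)) y}, g y = ∑ k, g (Fw p w (p k)) := by
  have hset : {y | adjJ p n (Fw p w (cent p)) y}
      = ↑(Finset.univ.image fun k => Fw p w (p k)) := by
    ext y
    simp only [Set.mem_setOf_eq, Finset.coe_image, Finset.coe_univ, Set.image_univ,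
      Set.mem_range]
    constructor
    · rintro ⟨w', hlen', j, (⟨hc, hy⟩ | ⟨hy, hx⟩)⟩
      · have hww : w = w' := (cent_eq_iff hp (hlen.trans hlen'.symm)).mp hc
        exact ⟨j, by rw [hww]; exact hy.symm⟩
      · exact absurd hx.symm (corner_ne_cent hp (hlen'.trans hlen.symm) j)
    · rintro ⟨k, rfl⟩
      exact ⟨w, hlen, k, Or.inl ⟨rfl, rfl⟩⟩
  rw [hset, finsum_mem_coe_finset,
    Finset.sum_image (fun k _ k' _ h => by_contra fun hne => corner_ne_same hp hne h)]

lemma sumJ_pi (hp : AffineIndependent ℝ p) (n : ℕ) (i : Fin 3) (g : Pt → ℝ) :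
    ∑ᶠ y ∈ {y | adjJ p n (p i) y}, g y = g (Fw p (List.replicate n i) (cent p)) := by
  have hset : {y | adjJ p n (p i) y} = {Fw p (List.replicate n i) (cent p)} := by
    ext y
    simp only [Set.mem_setOf_eq, Set.mem_singleton_iff]
    constructor
    · rintro ⟨w', hlen', j, (⟨hc, hy⟩ | ⟨hy, hx⟩)⟩
      · exfalso
        rw [← Fw_replicate p n i] at hc
        exact corner_ne_cent hp (by rw [List.length_replicate, hlen']) i hc
      · obtain ⟨hw', hj⟩ := rep_of_pi hp hx
        rw [hy, hw', hlen']
    · rintro rfl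
      exact ⟨List.replicate n i, List.length_replicate, i,
        Or.inr ⟨rfl, (Fw_replicate p n i).symm⟩⟩
  rw [hset, finsum_mem_singleton]

lemma sumG_pi (hp : AffineIndependent ℝ p) (n : ℕ) (i : Fin 3) (g : Pt → ℝ) :
    ∑ᶠ y ∈ {y | adjG p n (p i) y}, g y
      = ∑ k ∈ Finset.univ.erase i, g (Fw p (List.replicate n i) (p k)) := by
  have hset : {y | adjG p n (p i) y}
      = ↑((Finset.univ.erase i).image fun k => Fw p (List.replicate n i) (p k)) := by
    ext y
    simp only [Set.mem_setOf_eq, Finset.coe_image, Set.mem_image, Finset.mem_coe,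
      Finset.mem_erase, Finset.mem_univ, and_true]
    constructor
    · rintro ⟨hne, w', hlen', jj, k, hx, hy⟩
      obtain ⟨hw', hj⟩ := rep_of_pi hp hx
      refine ⟨k, ?_, ?_⟩
      · rintro rfl
        apply hne
        rw [hy, hw', hlen', Fw_replicate]
      · rw [hy, hw', hlen']
    · rintro ⟨k, hki, rfl⟩
      refine ⟨?_, List.replicate n i, List.length_replicate, i, k,
        (Fw_replicate p n i).symm, rfl⟩
      rw [← Fw_replicate p n i]
      exact corner_ne_same hp (Ne.symm hki)
  rw [hset, finsum_mem_coe_finset,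
    Finset.sum_image (fun k _ k' _ h => by_contra fun hne => corner_ne_same hp hne h)]

lemma sumJ_two (hp : AffineIndependent ℝ p) {n : ℕ} {u : List (Fin 3)} {l j : Fin 3}
    {t : ℕ} (hl : l ≠ j) (hlen : (u ++ l :: List.replicate t j).length = n) (g : Pt → ℝ) :
    ∑ᶠ y ∈ {y | adjJ p n (Fw p (u ++ l :: List.replicate t j) (p j)) y}, g y
      = g (Fw p (u ++ l :: List.replicate t j) (cent p))
        + g (Fw p (u ++ j :: List.replicate t l) (cent p)) := by
  set w1 := u ++ l :: List.replicate t j with hw1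
  set w2 := u ++ j :: List.replicate t l with hw2
  have hlen2 : w2.length = n := by rw [hw2]; rw [hw1] at hlen; simpa using hlen
  have hcne : Fw p w1 (cent p) ≠ Fw p w2 (cent p) := by
    intro h
    have := (cent_eq_iff hp (by simp [hw1, hw2])).mp h
    rw [hw1, hw2] at this
    have := List.append_cancel_left this
    simp only [List.cons.injEq] at this
    exact hl this.1
  have hset : {y | adjJ p n (Fw p w1 (p j)) y}
      = {Fw p w1 (cent p), Fw p w2 (cent p)} := by
    ext y
    simp only [Set.mem_setOf_eq, Set.mem_insert_iff, Set.mem_singleton_iff]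
    constructor
    · rintro ⟨w', hlen', j', (⟨hc, hy⟩ | ⟨hy, hx⟩)⟩
      · exact absurd hc (corner_ne_cent hp (hlen.trans hlen'.symm) j)
      · rcases reps_of_two hp hl (hlen'.trans hlen.symm) hx.symm with ⟨hw, _⟩ | ⟨hw, _⟩
        · exact Or.inl (by rw [hy, hw])
        · exact Or.inr (by rw [hy, hw])
    · rintro (rfl | rfl)
      · exact ⟨w1, hlen, j, Or.inr ⟨rfl, rfl⟩⟩
      · exact ⟨w2, hlen2, l, Or.inr ⟨rfl, two_cells_eq hp u t⟩⟩
  rw [hset, finsum_mem_pair hcne]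

lemma sumG_two (hp : AffineIndependent ℝ p) {n : ℕ} {u : List (Fin 3)} {l j : Fin 3}
    {t : ℕ} (hl : l ≠ j) (hlen : (u ++ l :: List.replicate t j).length = n) (g : Pt → ℝ) :
    ∑ᶠ y ∈ {y | adjG p n (Fw p (u ++ l :: List.replicate t j) (p j)) y}, g y
      = (∑ k ∈ Finset.univ.erase j, g (Fw p (u ++ l :: List.replicate t j) (p k)))
        + ∑ k ∈ Finset.univ.erase l, g (Fw p (u ++ j :: List.replicate t l) (p k)) := by
  set w1 := u ++ l :: List.replicate t j with hw1
  set w2 := u ++ j :: List.replicate t l with hw2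
  have hlen2 : w2.length = n := by rw [hw2]; rw [hw1] at hlen; simpa using hlen
  have hxx : Fw p w1 (p j) = Fw p w2 (p l) := two_cells_eq hp u t
  have hset : {y | adjG p n (Fw p w1 (p j)) y}
      = ↑(((Finset.univ.erase j).image fun k => Fw p w1 (p k))
          ∪ ((Finset.univ.erase l).image fun k => Fw p w2 (p k))) := by
    ext y
    simp only [Set.mem_setOf_eq, Finset.coe_union, Set.mem_union, Finset.coe_image,
      Set.mem_image, Finset.mem_coe, Finset.mem_erase, Finset.mem_univ, and_true]
    constructor
    · rintro ⟨hne, w', hlen', j', k, hx, hy⟩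
      rcases reps_of_two hp hl (hlen'.trans hlen.symm) hx.symm with ⟨hw, hj'⟩ | ⟨hw, hj'⟩
      · refine Or.inl ⟨k, ?_, by rw [hy, hw]⟩
        rintro rfl
        exact hne (by rw [hy, hw])
      · refine Or.inr ⟨k, ?_, by rw [hy, hw]⟩
        rintro rfl
        exact hne (by rw [hy, hw, ← hxx])
    · rintro (⟨k, hkj, rfl⟩ | ⟨k, hkl, rfl⟩)
      · exact ⟨corner_ne_same hp (Ne.symm hkj), w1, hlen, j, k, rfl, rfl⟩
      · exact ⟨hxx ▸ corner_ne_same hp (Ne.symm hkl), w2, hlen2, l, k, hxx, rfl⟩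
  have hdisj : Disjoint ((Finset.univ.erase j).image fun k => Fw p w1 (p k))
      ((Finset.univ.erase l).image fun k => Fw p w2 (p k)) := by
    rw [Finset.disjoint_left]
    intro a ha hb
    rw [Finset.mem_image] at ha hb
    obtain ⟨k, hk, hak⟩ := ha
    obtain ⟨k', hk', heq⟩ := hb
    rw [Finset.mem_erase] at hk hk'
    rw [← hak] at heq
    exact corner_ne_cross hp hl hk.1 hk'.1 heq.symm

  rw [hset, finsum_mem_coe_finset, Finset.sum_union hdisj,
    Finset.sum_image (fun k _ k' _ h => by_contra fun hne => corner_ne_same hp hne h),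
    Finset.sum_image (fun k _ k' _ h => by_contra fun hne => corner_ne_same hp hne h)]

lemma card_erase (i : Fin 3) : (Finset.univ.erase i).card = 2 := by
  rw [Finset.card_erase_of_mem (Finset.mem_univ i)]
  simp

lemma cellsum_pi (hp : AffineIndependent ℝ p) {n : ℕ} {ft : Pt → ℝ} {R : ℝ}
    (heig : ∀ x ∈ VG p n, lapG p n ft x = R * ft x) (i : Fin 3) :
    ∑ k, ft (Fw p (List.replicate n i) (p k)) = (2 * R + 3) * ft (p i) := by
  have hmem : p i ∈ VG p n :=
    ⟨List.replicate n i, List.length_replicate, i, (Fw_replicate p n i).symm⟩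
  have he := heig _ hmem
  rw [lapG, if_pos (Set.mem_range_self i),
    sumG_pi hp n i (fun y => ft y - ft (p i))] at he
  have hsplit : ∑ k ∈ Finset.univ.erase i, (ft (Fw p (List.replicate n i) (p k)) - ft (p i))
      = (∑ k ∈ Finset.univ.erase i, ft (Fw p (List.replicate n i) (p k))) - 2 * ft (p i) := by
    rw [Finset.sum_sub_distrib, Finset.sum_const, card_erase, nsmul_eq_mul]
    norm_num
  have herase := Finset.sum_erase_add Finset.univ
    (fun k => ft (Fw p (List.replicate n i) (p k))) (Finset.mem_univ i)
  rw [Fw_replicate] at herase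
  rw [hsplit] at he
  have h2 : (2:ℝ)⁻¹ ≠ 0 := by norm_num
  have := he
  nlinarith [he, herase]

lemma cellsum_two (hp : AffineIndependent ℝ p) {n : ℕ} {u : List (Fin 3)} {l j : Fin 3}
    {t : ℕ} {ft : Pt → ℝ} {R : ℝ} (hl : l ≠ j)
    (hlen : (u ++ l :: List.replicate t j).length = n)
    (heig : ∀ x ∈ VG p n, lapG p n ft x = R * ft x) :
    (∑ k, ft (Fw p (u ++ l :: List.replicate t j) (p k)))
      + (∑ k, ft (Fw p (u ++ j :: List.replicate t l) (p k)))
      = (4 * R + 6) * ft (Fw p (u ++ l :: List.replicate t j) (p j)) := by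
  set w1 := u ++ l :: List.replicate t j with hw1
  set w2 := u ++ j :: List.replicate t l with hw2
  set x := Fw p w1 (p j) with hxdef
  have hmem : x ∈ VG p n := ⟨w1, hlen, j, rfl⟩
  have he := heig _ hmem
  rw [lapG, if_neg (not_range_of_two hp hl),
    sumG_two hp hl hlen (fun y => ft y - ft x)] at he
  have hsplit1 : ∑ k ∈ Finset.univ.erase j, (ft (Fw p w1 (p k)) - ft x)
      = (∑ k ∈ Finset.univ.erase j, ft (Fw p w1 (p k))) - 2 * ft x := by
    rw [Finset.sum_sub_distrib, Finset.sum_const, card_erase, nsmul_eq_mul]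
    norm_num
  have hsplit2 : ∑ k ∈ Finset.univ.erase l, (ft (Fw p w2 (p k)) - ft x)
      = (∑ k ∈ Finset.univ.erase l, ft (Fw p w2 (p k))) - 2 * ft x := by
    rw [Finset.sum_sub_distrib, Finset.sum_const, card_erase, nsmul_eq_mul]
    norm_num
  have herase1 := Finset.sum_erase_add Finset.univ
    (fun k => ft (Fw p w1 (p k))) (Finset.mem_univ j)
  have herase2 := Finset.sum_erase_add Finset.univ
    (fun k => ft (Fw p w2 (p k))) (Finset.mem_univ l)
  have hx2 : Fw p w2 (p l) = x := (two_cells_eq hp u t).symm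
  rw [hx2] at herase2
  rw [← hw1, ← hw2] at he
  rw [hsplit1, hsplit2] at he
  have hxj : Fw p w1 (p j) = x := rfl
  rw [hxj] at herase1
  nlinarith [he, herase1, herase2]

lemma cellsum_zero (hp : AffineIndependent ℝ p) {n : ℕ} {ft : Pt → ℝ} {R : ℝ}
    (hR : 2 * R + 3 = 0)
    (heig : ∀ x ∈ VG p n, lapG p n ft x = R * ft x) {w : List (Fin 3)}
    (hlen : w.length = n) :
    ∑ k, ft (Fw p w (p k)) = 0 := by
  rcases List.eq_nil_or_concat w with rfl | ⟨u, a, rfl⟩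
  · have hn : n = 0 := by simpa using hlen.symm
    subst hn
    have h0 := cellsum_pi hp heig 0
    rw [List.replicate_zero] at h0
    rw [h0, hR, zero_mul]
  · rw [List.concat_eq_append] at hlen ⊢
    have hs : ∀ c d : Fin 3, c ≠ d →
        (∑ k, ft (Fw p (u ++ [c]) (p k))) + (∑ k, ft (Fw p (u ++ [d]) (p k))) = 0 := by
      intro c d hcd
      have hlen' : (u ++ c :: List.replicate 0 d).length = n := by
        simp only [List.replicate_zero]
        simpa using hlen
      have h2 := cellsum_two hp hcd hlen' heig
      rw [List.replicate_zero] at h2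
      have h46 : (4 * R + 6 : ℝ) = 0 := by linarith
      rw [h46, zero_mul] at h2
      exact h2
    obtain ⟨b, c, hab, hac, hbc⟩ : ∃ b c : Fin 3, a ≠ b ∧ a ≠ c ∧ b ≠ c := by
      fin_cases a
      · exact ⟨1, 2, by decide, by decide, by decide⟩
      · exact ⟨0, 2, by decide, by decide, by decide⟩
      · exact ⟨0, 1, by decide, by decide, by decide⟩
    have h1 := hs a b hab
    have h2 := hs a c hac
    have h3 := hs b c hbc
    linarith

end SGaux

/-- Spectral decimation from `G_n` to `J_n`: if `z ∉ {-3/2, -3/4, -1/2}` and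
`R_3(z) = (3/2)(z²+2z)` is an eigenvalue of `Δ^G_n` with eigenfunction `f̃`, then
extending `f̃` to `V^J_n` by `f(x) = (1/(3(1+z))) Σ_{y ∼_{J_n} x} f̃(y)` at each
`x ∈ V^H_n` gives an eigenfunction of `Δ^J_n` with eigenvalue `z`. -/
theorem decimation_G_to_J (p : Fin 3 → Pt) (hp : AffineIndependent ℝ p) (n : ℕ)
    (z : ℝ) (hz : z ∉ ({-3/2, -3/4, -1/2} : Set ℝ))
    (ft : Pt → ℝ) (hft : ∃ x ∈ VG p n, ft x ≠ 0)
    (heig : ∀ x ∈ VG p n, lapG p n ft x = (3/2 * (z^2 + 2*z)) * ft x)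
    (f : Pt → ℝ)
    (hfG : ∀ x ∈ VG p n, f x = ft x)
    (hfH : ∀ x ∈ VH p n,
      f x = (3 * (1 + z))⁻¹ * ∑ᶠ y ∈ {y | adjJ p n x y}, ft y) :
    (∃ x ∈ VJ p n, f x ≠ 0) ∧ ∀ x ∈ VJ p n, lapJ p n f x = z * f x := by
  open SGaux in
  constructor
  · obtain ⟨x, hx, hne⟩ := hft
    exact ⟨x, Or.inl hx, by rwa [hfG x hx]⟩
  · intro x hx
    rcases hx with ⟨w, hlen, j, rfl⟩ | ⟨w, hlen, rfl⟩
    · -- G vertex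
      rcases SGaux.decomp w j with hw | ⟨u, l, t, hl, hw⟩
      · -- corner case : x = p j
        have hwn : w = List.replicate n j := by rw [← hlen]; exact hw
        have hpt : Fw p w (p j) = p j := by rw [hwn, SGaux.Fw_replicate]
        rw [hpt]
        rw [lapJ, if_pos (Set.mem_range_self j),
          SGaux.sumJ_pi hp n j (fun y => f y - f (p j))]
        have hcmem : Fw p (List.replicate n j) (cent p) ∈ VH p n :=
          ⟨List.replicate n j, List.length_replicate, rfl⟩
        have hc := hfH _ hcmem
        rw [SGaux.sumJ_cent hp (List.length_replicate : (List.replicate n j).length = n) ft] at hc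
        have hS := SGaux.cellsum_pi hp heig j
        have hfx : f (p j) = ft (p j) :=
          hfG _ ⟨List.replicate n j, List.length_replicate, j,
            (SGaux.Fw_replicate p n j).symm⟩
        rw [hc, hS, hfx]
        have h2R : (2 * (3/2 * (z^2 + 2*z)) + 3 : ℝ) = 3*(1+z)^2 := by ring
        rw [h2R]
        rcases eq_or_ne z (-1) with rfl | hzne
        · norm_num
        · have h3 : (3*(1+z) : ℝ) ≠ 0 := by
            intro h; apply hzne; linarith
          field_simp
          ring
      · -- two-rep case
        subst hw
        set w1 := u ++ l :: List.replicate t j with hw1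
        set w2 := u ++ j :: List.replicate t l with hw2
        have hlen2 : w2.length = n := by
          rw [hw2]; rw [hw1] at hlen; simpa using hlen
        set x := Fw p w1 (p j) with hxdef
        rw [lapJ, if_neg (SGaux.not_range_of_two hp hl),
          if_neg (SGaux.G_not_in_VH hp hlen),
          SGaux.sumJ_two hp hl hlen (fun y => f y - f x)]
        have hc1 := hfH _ (⟨w1, hlen, rfl⟩ : Fw p w1 (cent p) ∈ VH p n)
        have hc2 := hfH _ (⟨w2, hlen2, rfl⟩ : Fw p w2 (cent p) ∈ VH p n)
        rw [SGaux.sumJ_cent hp hlen ft] at hc1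
        rw [SGaux.sumJ_cent hp hlen2 ft] at hc2
        have hsum := SGaux.cellsum_two hp hl hlen heig
        rw [← hw1, ← hw2, ← hxdef] at hsum
        have hfx : f x = ft x := hfG _ ⟨w1, hlen, j, rfl⟩
        rw [hc1, hc2, hfx]
        have h4R : (4 * (3/2 * (z^2 + 2*z)) + 6 : ℝ) = 6*(1+z)^2 := by ring
        rw [h4R] at hsum
        have hkey : (3*(1+z))⁻¹ * (∑ k, ft (Fw p w1 (p k)))
            + (3*(1+z))⁻¹ * (∑ k, ft (Fw p w2 (p k))) = 2*(1+z) * ft x := by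
          rw [← mul_add, hsum]
          rcases eq_or_ne z (-1) with rfl | hzne
          · norm_num
          · have h3 : (3*(1+z) : ℝ) ≠ 0 := by intro h; apply hzne; linarith
            field_simp
            ring
        linarith [hkey]
    · -- center
      have hmemH : Fw p w (cent p) ∈ VH p n := ⟨w, hlen, rfl⟩
      rw [lapJ, if_neg (SGaux.cent_not_range hp hlen), if_pos hmemH,
        SGaux.sumJ_cent hp hlen (fun y => f y - f (Fw p w (cent p)))]
      have hfc := hfH _ (⟨w, hlen, rfl⟩ : Fw p w (cent p) ∈ VH p n)
      rw [SGaux.sumJ_cent hp hlen ft] at hfc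
      have hsum : ∑ k, (f (Fw p w (p k)) - f (Fw p w (cent p)))
          = (∑ k, ft (Fw p w (p k))) - 3 * f (Fw p w (cent p)) := by
        rw [Finset.sum_sub_distrib, Finset.sum_const, Finset.card_univ,
          Fintype.card_fin, nsmul_eq_mul]
        have : ∑ k, f (Fw p w (p k)) = ∑ k, ft (Fw p w (p k)) :=
          Finset.sum_congr rfl fun k _ => hfG _ ⟨w, hlen, k, rfl⟩
        rw [this]
        norm_num
      rw [hsum]
      rcases eq_or_ne z (-1) with rfl | hzne
      · have hR0 : (2 * (3/2 * ((-1:ℝ)^2 + 2*(-1))) + 3 : ℝ) = 0 := by norm_num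
        have hS0 := SGaux.cellsum_zero hp hR0 heig hlen
        rw [hfc, hS0]
        norm_num
      · have h3 : (3*(1+z) : ℝ) ≠ 0 := by intro h; apply hzne; linarith
        have h1 : (1+z : ℝ) ≠ 0 := by intro h; apply hzne; linarith
        rw [hfc]
        field_simp
        ring
end
end

section
/- The value −1 is an eigenvalue of the Laplacian Δ^J_n on the graph J_n with eigenspace of dimension (3^n + 3)/2, consisting of exactly those functions g vanishing at every central vertex x ∈ V^H_n and satisfying Σ_{y ∼_{J_n} x} g(y) = 0 for every x ∈ V^H_n. -/
noncomputable section
attribute [local instance] Classical.propDecidable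

namespace SG

variable (p : Fin 3 → Pt)

def combo (v : Fin 3 → ℝ) : Pt := v 0 • p 0 + v 1 • p 1 + v 2 • p 2

lemma combo_inj (hp : AffineIndependent ℝ p) {v u : Fin 3 → ℝ}
    (hv : v 0 + v 1 + v 2 = 1) (hu : u 0 + u 1 + u 2 = 1)
    (h : combo p v = combo p u) : v = u := by
  have hv' : ∑ i, v i = 1 := by simp [Fin.sum_univ_three, hv]
  have hu' : ∑ i, u i = 1 := by simp [Fin.sum_univ_three, hu]
  have h1 : Finset.univ.affineCombination ℝ p v = Finset.univ.affineCombination ℝ p u := by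
    rw [Finset.univ.affineCombination_eq_linear_combination _ _ hv',
        Finset.univ.affineCombination_eq_linear_combination _ _ hu']
    simpa [combo, Fin.sum_univ_three] using h
  have := hp.indicator_eq_of_affineCombination_eq Finset.univ Finset.univ v u hv' hu' h1
  funext i
  have := congrFun this i
  simpa using this

lemma combo_delta (j : Fin 3) : combo p (fun k => if k = j then 1 else 0) = p j := by
  fin_cases j <;> simp [combo]

lemma Fmap_combo (v : Fin 3 → ℝ) (j : Fin 3) :
    Fmap p j (combo p v) = combo p (fun k => (v k + if k = j then 1 else 0) / 2) := by
  show midpoint ℝ (combo p v) (p j) = _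
  rw [midpoint_eq_smul_add]
  fin_cases j <;>
    · apply Prod.ext <;>
      · simp [combo, Prod.smul_fst, Prod.smul_snd, Prod.fst_add, Prod.snd_add, smul_eq_mul]
        ring

lemma cent_combo : cent p = combo p (fun _ => 1/3) := by
  apply Prod.ext <;>
    · simp only [combo, cent, Prod.smul_fst, Prod.smul_snd, Prod.fst_add, Prod.snd_add,
        smul_eq_mul]
      ring


def Xc : List (Fin 3) → Fin 3 → ℕ
  | [], _ => 0
  | a :: t, k => (if k = a then 2 ^ t.length else 0) + Xc t k

def Nc (w : List (Fin 3)) (j k : Fin 3) : ℕ := Xc w k + if k = j then 1 else 0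

lemma Xc_lt (w : List (Fin 3)) (k : Fin 3) : Xc w k < 2 ^ w.length := by
  induction w with
  | nil => simp [Xc]
  | cons a t ih =>
    simp only [Xc, List.length_cons, pow_succ]
    split <;> omega

lemma Nc_le (w : List (Fin 3)) (j k : Fin 3) : Nc w j k ≤ 2 ^ w.length := by
  have := Xc_lt w k
  unfold Nc; split <;> omega

lemma Xc_sum (w : List (Fin 3)) : Xc w 0 + Xc w 1 + Xc w 2 + 1 = 2 ^ w.length := by
  induction w with
  | nil => simp [Xc]
  | cons a t ih =>
    simp only [Xc, List.length_cons, pow_succ]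
    fin_cases a <;> simp <;> omega

lemma Nc_sum (w : List (Fin 3)) (j : Fin 3) : Nc w j 0 + Nc w j 1 + Nc w j 2 = 2 ^ w.length := by
  have := Xc_sum w
  unfold Nc
  fin_cases j <;> simp <;> omega

/-- coordinates of a vertex address -/
lemma Fw_coord (w : List (Fin 3)) (j : Fin 3) :
    Fw p w (p j) = combo p (fun k => (Nc w j k : ℝ) / 2 ^ w.length) := by
  induction w with
  | nil =>
    simp only [Fw, id_eq, Nc, Xc, List.length_nil, pow_zero]
    rw [← combo_delta p j]
    congr 1; funext k; split <;> simp
  | cons a t ih =>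
    show Fmap p a (Fw p t (p j)) = _
    rw [ih, Fmap_combo]
    congr 1; funext k
    have h1 : (Nc (a :: t) j k : ℝ) = (if k = a then (2:ℝ) ^ t.length else 0) + Nc t j k := by
      simp only [Nc, Xc]; push_cast; split <;> ring
    rw [h1]
    have h2 : (2:ℝ) ^ t.length ≠ 0 := by positivity
    simp only [List.length_cons, pow_succ]
    split <;> field_simp <;> try ring

lemma Fw_coord_cent (w : List (Fin 3)) :
    Fw p w (cent p) = combo p (fun k => (1 + 3 * Xc w k : ℝ) / (3 * 2 ^ w.length)) := by
  induction w with
  | nil =>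
    simp only [Fw, id_eq, Xc, List.length_nil, pow_zero, cent_combo]
    congr 1; funext k; norm_num
  | cons a t ih =>
    show Fmap p a (Fw p t (cent p)) = _
    rw [ih, Fmap_combo]
    congr 1; funext k
    have h1 : (Xc (a :: t) k : ℝ) = (if k = a then (2:ℝ) ^ t.length else 0) + Xc t k := by
      simp only [Xc]; push_cast; split <;> ring
    rw [h1]
    have h2 : (2:ℝ) ^ t.length ≠ 0 := by positivity
    simp only [List.length_cons, pow_succ]
    split
    · field_simp; ring
    · rw [add_zero, div_div]; ring_nf
lemma Nc_cons (a : Fin 3) (t : List (Fin 3)) (j c : Fin 3) :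
    Nc (a :: t) j c = (if c = a then 2 ^ t.length else 0) + Nc t j c := by
  simp only [Nc, Xc]; ring

lemma Nc_eq_pow : ∀ {w : List (Fin 3)} {j c : Fin 3}, Nc w j c = 2 ^ w.length →
    w = List.replicate w.length c ∧ j = c := by
  intro w
  induction w with
  | nil =>
    intro j c h
    simp only [Nc, Xc, List.length_nil, pow_zero] at h
    constructor
    · rfl
    · by_contra hne
      rw [if_neg (fun hh => hne hh.symm)] at h
      omega
  | cons a t ih =>
    intro j c h
    rw [Nc_cons] at h
    have hb := Nc_le t j c
    simp only [List.length_cons, pow_succ] at h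
    by_cases hc : c = a
    · rw [if_pos hc] at h
      have h2 : Nc t j c = 2 ^ t.length := by omega
      obtain ⟨ht, hj⟩ := ih h2
      subst hc
      refine ⟨?_, hj⟩
      rw [List.length_cons, List.replicate_succ, ← ht]
    · rw [if_neg hc] at h
      have : 0 < 2 ^ t.length := Nat.pow_pos (by norm_num)
      omega

lemma Nc_ident : ∀ (w w' : List (Fin 3)) (j k : Fin 3), w.length = w'.length →
    Nc w j = Nc w' k →
    (w = w' ∧ j = k) ∨
      ∃ u : List (Fin 3), ∃ a b : Fin 3, ∃ s : ℕ, a ≠ b ∧ w = u ++ a :: List.replicate s b ∧ j = b ∧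
        w' = u ++ b :: List.replicate s a ∧ k = a := by
  intro w
  induction w with
  | nil =>
    intro w' j k hl h
    rw [List.length_nil] at hl
    have hw' : w' = [] := List.eq_nil_of_length_eq_zero hl.symm
    subst hw'
    left
    refine ⟨rfl, ?_⟩
    by_contra hne
    have hjk := congrFun h j
    simp [Nc, Xc, hne] at hjk
  | cons a t ih =>
    intro w' j k hl h
    cases w' with
    | nil => simp at hl
    | cons b t' =>
      simp only [List.length_cons, Nat.add_right_cancel_iff] at hl
      by_cases hab : a = b
      · subst hab
        have ht : Nc t j = Nc t' k := by
          funext c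
          have hc := congrFun h c
          rw [Nc_cons, Nc_cons, hl] at hc
          omega
        rcases ih t' j k hl ht with ⟨h1, h2⟩ | ⟨u, a', b', s, hne, hw, hj, hw', hk⟩
        · left; rw [h1, h2]; exact ⟨rfl, rfl⟩
        · right
          exact ⟨a :: u, a', b', s, hne, by rw [List.cons_append, hw], hj,
            by rw [List.cons_append, hw'], hk⟩
      · have ha := congrFun h a
        have hbb := congrFun h b
        rw [Nc_cons, Nc_cons, if_pos rfl, if_neg hab] at ha
        rw [Nc_cons, Nc_cons, if_pos rfl, if_neg (fun hh => hab hh.symm)] at hbb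
        have hb1 := Nc_le t' k a
        have hb2 := Nc_le t j b
        rw [← hl] at hb1
        have hE : (2:ℕ) ^ t'.length = 2 ^ t.length := by rw [hl]
        have ht' : Nc t' k a = 2 ^ t'.length := by omega
        have ht : Nc t j b = 2 ^ t.length := by omega
        obtain ⟨ht'e, hk⟩ := Nc_eq_pow ht'
        obtain ⟨hte, hj⟩ := Nc_eq_pow ht
        right
        refine ⟨[], a, b, t.length, hab, ?_, hj, ?_, hk⟩
        · rw [List.nil_append, ← hte]
        · rw [List.nil_append, hl, ← ht'e]

lemma exists_decomp : ∀ {w : List (Fin 3)} {j : Fin 3}, w ≠ List.replicate w.length j →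
    ∃ u : List (Fin 3), ∃ a : Fin 3, ∃ s : ℕ, a ≠ j ∧ w = u ++ a :: List.replicate s j := by
  intro w
  induction w with
  | nil => intro j h; simp at h
  | cons b t ih =>
    intro j h
    by_cases ht : t = List.replicate t.length j
    · have hbj : b ≠ j := by
        intro hbj
        apply h
        rw [List.length_cons, List.replicate_succ, ← ht, ← hbj]
      exact ⟨[], b, t.length, hbj, by rw [List.nil_append, ← ht]⟩
    · obtain ⟨u, a, s, ha, hw⟩ := ih ht
      exact ⟨b :: u, a, s, ha, by rw [List.cons_append, ← hw]⟩

lemma rep_aux : ∀ (s1 s2 : ℕ) (l1 l2 : List (Fin 3)) (a1 a2 j : Fin 3), a1 ≠ j → a2 ≠ j →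
    List.replicate s1 j ++ a1 :: l1 = List.replicate s2 j ++ a2 :: l2 →
    s1 = s2 ∧ a1 = a2 ∧ l1 = l2 := by
  intro s1
  induction s1 with
  | zero =>
    intro s2 l1 l2 a1 a2 j h1 h2 he
    cases s2 with
    | zero => simp_all
    | succ m =>
      simp only [List.replicate_succ, List.replicate_zero, List.nil_append, List.cons_append,
        List.cons.injEq] at he
      exact absurd he.1 h1
  | succ m ih =>
    intro s2 l1 l2 a1 a2 j h1 h2 he
    cases s2 with
    | zero =>
      simp only [List.replicate_succ, List.replicate_zero, List.nil_append, List.cons_append,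
        List.cons.injEq] at he
      exact absurd he.1.symm h2
    | succ m2 =>
      simp only [List.replicate_succ, List.cons_append, List.cons.injEq] at he
      obtain ⟨s_eq, a_eq, l_eq⟩ := ih m2 l1 l2 a1 a2 j h1 h2 he.2
      exact ⟨by omega, a_eq, l_eq⟩

lemma decomp_unique {u1 u2 : List (Fin 3)} {a1 a2 j : Fin 3} {s1 s2 : ℕ}
    (h1 : a1 ≠ j) (h2 : a2 ≠ j)
    (he : u1 ++ a1 :: List.replicate s1 j = u2 ++ a2 :: List.replicate s2 j) :
    u1 = u2 ∧ a1 = a2 ∧ s1 = s2 := by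
  have hr := congrArg List.reverse he
  simp only [List.reverse_append, List.reverse_cons, List.reverse_replicate,
    List.append_assoc, List.singleton_append] at hr
  obtain ⟨hs, ha, hl⟩ := rep_aux s1 s2 u1.reverse u2.reverse a1 a2 j h1 h2 hr
  exact ⟨List.reverse_injective hl, ha, hs⟩

lemma Xc_inj : ∀ (w w' : List (Fin 3)), w.length = w'.length → Xc w = Xc w' → w = w' := by
  intro w
  induction w with
  | nil =>
    intro w' hl _
    exact (List.eq_nil_of_length_eq_zero ((List.length_nil (α := Fin 3)) ▸ hl).symm).symm
  | cons a t ih =>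
    intro w' hl h
    cases w' with
    | nil => simp at hl
    | cons b t' =>
      simp only [List.length_cons, Nat.add_right_cancel_iff] at hl
      have hab : a = b := by
        by_contra hab
        have ha := congrFun h a
        simp [Xc, hab] at ha
        have := Xc_lt t' a
        rw [← hl] at this
        omega
      subst hab
      have : Xc t = Xc t' := by
        funext c
        have hc := congrFun h c
        simp only [Xc, hl] at hc
        omega
      rw [ih t' hl this]

lemma Xc_append (u v : List (Fin 3)) (c : Fin 3) :
    Xc (u ++ v) c = 2 ^ v.length * Xc u c + Xc v c := by
  induction u with
  | nil => simp [Xc]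
  | cons d t ih =>
    simp only [List.cons_append, Xc, List.length_append, ih, List.append_eq]
    split
    · simp only [pow_add]; ring
    · ring

lemma Xc_replicate (s : ℕ) (b c : Fin 3) :
    Xc (List.replicate s b) c = if c = b then 2 ^ s - 1 else 0 := by
  induction s with
  | zero => simp [Xc]
  | succ m ih =>
    rw [List.replicate_succ]
    simp only [Xc, List.length_replicate, ih]
    have : 0 < 2 ^ m := Nat.pow_pos (by norm_num)
    by_cases hc : c = b <;> simp [hc, pow_succ] <;> omega

lemma mirror_Nc (u : List (Fin 3)) (a b : Fin 3) (s : ℕ) :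
    Nc (u ++ a :: List.replicate s b) b = Nc (u ++ b :: List.replicate s a) a := by
  by_cases hab : a = b
  · rw [hab]
  funext c
  simp only [Nc, Xc_append, Xc, Xc_replicate, List.length_cons, List.length_replicate]
  have : 0 < 2 ^ s := Nat.pow_pos (by norm_num)
  have hab' : ¬ b = a := fun h => hab h.symm
  by_cases h1 : c = a <;> by_cases h2 : c = b <;>
    simp [h1, h2, hab, hab'] <;> omega
variable (hp : AffineIndependent ℝ p)

lemma Nc_coord_sum (w : List (Fin 3)) (j : Fin 3) :
    (Nc w j 0 : ℝ) / 2 ^ w.length + (Nc w j 1 : ℝ) / 2 ^ w.length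
      + (Nc w j 2 : ℝ) / 2 ^ w.length = 1 := by
  have h := Nc_sum w j
  have h2 : (2:ℝ) ^ w.length ≠ 0 := by positivity
  field_simp
  exact_mod_cast h

include hp

/-- bridge: equality of vertex addresses is equality of integer coordinates -/
lemma Fw_eq_iff {w w' : List (Fin 3)} (hl : w.length = w'.length) (j k : Fin 3) :
    Fw p w (p j) = Fw p w' (p k) ↔ Nc w j = Nc w' k := by
  rw [Fw_coord, Fw_coord]
  constructor
  · intro h
    have := combo_inj p hp (v := fun c => (Nc w j c : ℝ) / 2 ^ w.length)
      (u := fun c => (Nc w' k c : ℝ) / 2 ^ w'.length)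
      (Nc_coord_sum w j) (Nc_coord_sum w' k) h
    funext c
    have hc := congrFun this c
    rw [hl] at hc
    have h2 : (2:ℝ) ^ w'.length ≠ 0 := by positivity
    field_simp at hc
    exact_mod_cast hc
  · intro h; rw [h, hl]

lemma cent_eq_iff {w w' : List (Fin 3)} (hl : w.length = w'.length) :
    Fw p w (cent p) = Fw p w' (cent p) ↔ Xc w = Xc w' := by
  rw [Fw_coord_cent, Fw_coord_cent]
  have hs : ∀ v : List (Fin 3),
      (1 + 3 * Xc v 0 : ℝ) / (3 * 2 ^ v.length) + (1 + 3 * Xc v 1 : ℝ) / (3 * 2 ^ v.length)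
        + (1 + 3 * Xc v 2 : ℝ) / (3 * 2 ^ v.length) = 1 := by
    intro v
    have h := Xc_sum v
    have h2 : (2:ℝ) ^ v.length ≠ 0 := by positivity
    have hr : (Xc v 0 : ℝ) + Xc v 1 + Xc v 2 + 1 = 2 ^ v.length := by exact_mod_cast h
    field_simp
    linarith
  constructor
  · intro h
    have := combo_inj p hp (hs w) (hs w') h
    funext c
    have hc := congrFun this c
    rw [hl] at hc
    have h2 : (2:ℝ) ^ w'.length ≠ 0 := by positivity
    field_simp at hc
    exact_mod_cast (by linarith : (Xc w c : ℝ) = Xc w' c)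
  · intro h; rw [h, hl]

lemma cent_ne_vertex {w w' : List (Fin 3)} (hl : w.length = w'.length) (j : Fin 3) :
    Fw p w (cent p) ≠ Fw p w' (p j) := by
  rw [Fw_coord_cent, Fw_coord]
  intro h
  have := combo_inj p hp (by
      have h2 : (2:ℝ) ^ w.length ≠ 0 := by positivity
      have hx := Xc_sum w
      have hr : (Xc w 0 : ℝ) + Xc w 1 + Xc w 2 + 1 = 2 ^ w.length := by exact_mod_cast hx
      field_simp
      linarith) (Nc_coord_sum w' j) h
  have hc := congrFun this 0
  rw [hl] at hc
  have h2 : (2:ℝ) ^ w'.length ≠ 0 := by positivity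
  rw [div_eq_div_iff (by positivity) (by positivity)] at hc
  have hc' : (1 + 3 * Xc w 0) * 2 ^ w'.length = Nc w' j 0 * (3 * 2 ^ w'.length) := by
    exact_mod_cast hc
  rw [show Nc w' j 0 * (3 * 2 ^ w'.length) = Nc w' j 0 * 3 * 2 ^ w'.length by ring] at hc'
  have hP : 0 < 2 ^ w'.length := Nat.pow_pos (by norm_num)
  have := Nat.eq_of_mul_eq_mul_right hP hc'
  omega
omit hp in
lemma Fw_replicate_self (s : ℕ) (j : Fin 3) : Fw p (List.replicate s j) (p j) = p j := by
  induction s with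
  | zero => rfl
  | succ m ih =>
    rw [List.replicate_succ]
    show Fmap p j (Fw p (List.replicate m j) (p j)) = p j
    rw [ih]
    simp [Fmap, midpoint_self]

lemma vertex_inj_j {w : List (Fin 3)} {j k : Fin 3} (h : Fw p w (p j) = Fw p w (p k)) :
    j = k := by
  have h0 := (Fw_eq_iff p hp rfl j k).mp h
  have hj := congrFun h0 j
  by_contra hne
  unfold Nc at hj
  rw [if_pos (rfl : j = j), if_neg hne] at hj
  omega

lemma center_inj {w w' : List (Fin 3)} (hl : w.length = w'.length)
    (h : Fw p w (cent p) = Fw p w' (cent p)) : w = w' :=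
  Xc_inj w w' hl ((cent_eq_iff p hp hl).mp h)

lemma mirror_eq (u : List (Fin 3)) (a b : Fin 3) (s : ℕ) :
    Fw p (u ++ a :: List.replicate s b) (p b) = Fw p (u ++ b :: List.replicate s a) (p a) := by
  refine (Fw_eq_iff p hp (by simp) b a).mpr (mirror_Nc u a b s)

lemma fiber_corner {i : Fin 3} {w : List (Fin 3)} {k : Fin 3}
    (h : Fw p w (p k) = p i) : w = List.replicate w.length i ∧ k = i := by
  have h2 : Fw p w (p k) = Fw p (List.replicate w.length i) (p i) := by
    rw [Fw_replicate_self, h]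
  have h3 := (Fw_eq_iff p hp (by simp) k i).mp h2
  rcases Nc_ident w (List.replicate w.length i) k i (by simp) h3 with ⟨h4, h5⟩ | h4
  · exact ⟨by rw [← h4], h5⟩
  · obtain ⟨u, a, b, s, hab, hw, hk, hrep, hi⟩ := h4
    exfalso
    apply hab
    have hbmem : b ∈ List.replicate w.length i := by rw [hrep]; simp
    rw [List.eq_of_mem_replicate hbmem, ← hi]

/-- the two addresses of a non-corner vertex -/
lemma fiber_noncorner {w u : List (Fin 3)} {a j : Fin 3} {s : ℕ} (ha : a ≠ j)
    (hw : w = u ++ a :: List.replicate s j) {w' : List (Fin 3)} {k : Fin 3}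
    (hl : w'.length = w.length) (h : Fw p w' (p k) = Fw p w (p j)) :
    (w' = w ∧ k = j) ∨ (w' = u ++ j :: List.replicate s a ∧ k = a) := by
  have h3 := (Fw_eq_iff p hp hl k j).mp h
  rcases Nc_ident w' w k j hl h3 with ⟨h4, h5⟩ | h4
  · exact Or.inl ⟨h4, h5⟩
  · obtain ⟨u', a', b', s', hab, hw', hk, hwd, hj⟩ := h4
    right
    have h1 : b' ≠ j := fun hh => hab (hj.symm.trans hh.symm)
    have hwd' : w = u' ++ b' :: List.replicate s' j := by rw [hwd, ← hj]
    obtain ⟨hu, hb, hs⟩ := decomp_unique h1 ha (hwd'.symm.trans hw)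
    exact ⟨by rw [hw', hu, hb, hs, ← hj], hk.trans hb⟩

lemma noncorner_not_corner {w u : List (Fin 3)} {a j : Fin 3} {s : ℕ} (ha : a ≠ j)
    (hw : w = u ++ a :: List.replicate s j) (i : Fin 3) :
    Fw p w (p j) ≠ p i := by
  intro h
  obtain ⟨h1, h2⟩ := fiber_corner p hp h
  subst h2
  apply ha
  have hmem : a ∈ List.replicate w.length j := by
    rw [← h1, hw]; simp
  exact List.eq_of_mem_replicate hmem

omit hp in
lemma mirror_ne {u : List (Fin 3)} {a j : Fin 3} {s : ℕ} (ha : a ≠ j) :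
    u ++ j :: List.replicate s a ≠ u ++ a :: List.replicate s j := by
  intro h
  have h2 := congrArg (fun l => List.drop u.length l) h
  simp only [List.drop_left] at h2
  have h3 : j = a := by injection h2
  exact ha h3.symm
omit hp in
lemma corner_mem_VG (n : ℕ) (i : Fin 3) : p i ∈ VG p n :=
  ⟨List.replicate n i, by simp, i, (Fw_replicate_self p n i).symm⟩

lemma VH_not_range {n : ℕ} {x : Pt} (hx : x ∈ VH p n) : x ∉ Set.range p := by
  rintro ⟨i, rfl⟩
  obtain ⟨w, hw, hc⟩ := hx
  exact cent_ne_vertex p hp (w' := List.replicate n i) (by simp [hw]) i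
    (hc.symm.trans (Fw_replicate_self p n i).symm)

lemma VH_not_VG {n : ℕ} {x : Pt} (hx : x ∈ VH p n) : x ∉ VG p n := by
  rintro ⟨w', hw', j, hj⟩
  obtain ⟨w, hw, hc⟩ := hx
  exact cent_ne_vertex p hp (by rw [hw, hw']) j (hc.symm.trans hj)

lemma adj_center (n : ℕ) {w : List (Fin 3)} (hw : w.length = n) (h : Pt → ℝ) :
    ∑ᶠ y ∈ {y | adjJ p n (Fw p w (cent p)) y}, h y = ∑ j : Fin 3, h (Fw p w (p j)) := by
  have hset : {y | adjJ p n (Fw p w (cent p)) y}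
      = ↑(Finset.image (fun j => Fw p w (p j)) Finset.univ) := by
    ext y
    simp only [Set.mem_setOf_eq, Finset.coe_image, Finset.coe_univ, Set.image_univ,
      Set.mem_range]
    constructor
    · rintro ⟨w₁, hw₁, j, ⟨hc, hy⟩ | ⟨hc, hy⟩⟩
      · have hww : w = w₁ := center_inj p hp (by rw [hw₁, hw]) hc
        exact ⟨j, by rw [hy, hww]⟩
      · exact absurd hy (cent_ne_vertex p hp (by rw [hw₁, hw]) j)
    · rintro ⟨j, rfl⟩
      exact ⟨w, hw, j, Or.inl ⟨rfl, rfl⟩⟩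
  rw [hset, finsum_mem_coe_finset, Finset.sum_image (fun j _ k _ hjk => vertex_inj_j p hp hjk)]

lemma adj_corner (n : ℕ) (i : Fin 3) (h : Pt → ℝ) :
    ∑ᶠ y ∈ {y | adjJ p n (p i) y}, h y = h (Fw p (List.replicate n i) (cent p)) := by
  have hset : {y | adjJ p n (p i) y} = {Fw p (List.replicate n i) (cent p)} := by
    ext y
    simp only [Set.mem_setOf_eq, Set.mem_singleton_iff]
    constructor
    · rintro ⟨w₁, hw₁, j, ⟨hc, hy⟩ | ⟨hc, hy⟩⟩
      · exact absurd (hc.symm.trans (Fw_replicate_self p n i).symm)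
          (cent_ne_vertex p hp (w := w₁) (w' := List.replicate n i) (by simp [hw₁]) i)
      · obtain ⟨h1, h2⟩ := fiber_corner p hp hy.symm
        rw [hc, h1, hw₁]
    · rintro rfl
      exact ⟨List.replicate n i, by simp, i, Or.inr ⟨rfl, (Fw_replicate_self p n i).symm⟩⟩
  rw [hset, finsum_mem_singleton]

lemma noncorner_not_VH {n : ℕ} {w : List (Fin 3)} {j : Fin 3}
    (hw : w.length = n) : Fw p w (p j) ∉ VH p n := by
  rintro ⟨w', hw', hc⟩
  exact cent_ne_vertex p hp (by rw [hw', hw]) j hc.symm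

lemma adj_noncorner (n : ℕ) {u : List (Fin 3)} {a j : Fin 3} {s : ℕ} (ha : a ≠ j)
    (hw : (u ++ a :: List.replicate s j).length = n) (h : Pt → ℝ) :
    ∑ᶠ y ∈ {y | adjJ p n (Fw p (u ++ a :: List.replicate s j) (p j)) y}, h y
      = h (Fw p (u ++ a :: List.replicate s j) (cent p))
        + h (Fw p (u ++ j :: List.replicate s a) (cent p)) := by
  set w := u ++ a :: List.replicate s j with hwdef
  set w₂ := u ++ j :: List.replicate s a with hw2def
  have hlen2 : w₂.length = n := by
    rw [← hw]; simp [hwdef, hw2def]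
  have hset : {y | adjJ p n (Fw p w (p j)) y}
      = {Fw p w (cent p), Fw p w₂ (cent p)} := by
    ext y
    simp only [Set.mem_setOf_eq, Set.mem_insert_iff, Set.mem_singleton_iff]
    constructor
    · rintro ⟨w₁, hw₁, k, ⟨hc, hy⟩ | ⟨hc, hy⟩⟩
      · exact absurd hc.symm (cent_ne_vertex p hp (by rw [hw₁, hw]) j)
      · rcases fiber_noncorner p hp ha hwdef (by rw [hw₁, hw]) hy.symm with ⟨h1, _⟩ | ⟨h1, _⟩
        · left; rw [hc, h1]
        · right; rw [hc, h1]
    · rintro (rfl | rfl)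
      · exact ⟨w, hw, j, Or.inr ⟨rfl, rfl⟩⟩
      · exact ⟨w₂, hlen2, a, Or.inr ⟨rfl, mirror_eq p hp u a j s⟩⟩
  have hne : Fw p w (cent p) ≠ Fw p w₂ (cent p) := by
    intro hcc
    exact mirror_ne ha (center_inj p hp (by rw [hlen2, hw]) hcc).symm
  rw [hset, finsum_mem_pair hne]
omit hp in
lemma hanoi_pos : ∀ (m : ℕ) (c : List (Fin 3) → ℝ),
    (∀ (u : List (Fin 3)) (a b : Fin 3) (s : ℕ), a ≠ b →
      (u ++ a :: List.replicate s b).length = m + 1 →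
      c (u ++ a :: List.replicate s b) + c (u ++ b :: List.replicate s a) = 0) →
    ∀ w : List (Fin 3), w.length = m + 1 → c w = 0 := by
  intro m
  induction m with
  | zero =>
    intro c hadj w hw
    have key : ∀ a b : Fin 3, a ≠ b → c [a] + c [b] = 0 := by
      intro a b hab
      have := hadj [] a b 0 hab (by simp)
      simpa using this
    have h01 := key 0 1 (by decide)
    have h12 := key 1 2 (by decide)
    have h02 := key 0 2 (by decide)
    cases w with
    | nil => simp at hw
    | cons x t =>
      have ht : t = [] := by
        simp only [List.length_cons] at hw
        exact List.eq_nil_of_length_eq_zero (by omega)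
      subst ht
      have hx3 : x = 0 ∨ x = 1 ∨ x = 2 := by fin_cases x <;> simp
      rcases hx3 with rfl | rfl | rfl <;> linarith
  | succ m ih =>
    intro c hadj w hw
    cases w with
    | nil => simp at hw
    | cons x t =>
      have := ih (fun v => c (x :: v)) ?_ t ?_
      · simpa using this
      · intro u a b s hab hlen
        have := hadj (x :: u) a b s hab (by simp at hlen ⊢; omega)
        simpa using this
      · simpa using hw

omit hp in
lemma hanoi (n : ℕ) (c : List (Fin 3) → ℝ)
    (hadj : ∀ (u : List (Fin 3)) (a b : Fin 3) (s : ℕ), a ≠ b →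
      (u ++ a :: List.replicate s b).length = n →
      c (u ++ a :: List.replicate s b) + c (u ++ b :: List.replicate s a) = 0)
    (hcorner : ∀ j : Fin 3, c (List.replicate n j) = 0) :
    ∀ w : List (Fin 3), w.length = n → c w = 0 := by
  cases n with
  | zero =>
    intro w hw
    rw [List.eq_nil_of_length_eq_zero hw]
    simpa using hcorner 0
  | succ m => exact hanoi_pos m c hadj
/-- the cell sums of an eigenfunction vanish -/
lemma eig_cell_sum {n : ℕ} {g : Pt → ℝ}
    (h1 : ∀ x ∈ VJ p n, lapJ p n g x = (-1 : ℝ) * g x)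
    {w : List (Fin 3)} (hw : w.length = n) :
    ∑ j : Fin 3, g (Fw p w (p j)) = 0 := by
  set x := Fw p w (cent p) with hx
  have hxH : x ∈ VH p n := ⟨w, hw, rfl⟩
  have heq := h1 x (Or.inr hxH)
  rw [lapJ, if_neg (VH_not_range p hp hxH), if_pos hxH,
    adj_center p hp n hw (fun y => g y - g x)] at heq
  have hsum : ∑ j : Fin 3, (g (Fw p w (p j)) - g x)
      = (∑ j : Fin 3, g (Fw p w (p j))) - 3 * g x := by
    rw [Fin.sum_univ_three, Fin.sum_univ_three]; ring
  rw [hsum] at heq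
  · linarith [heq]

lemma eig_corner_center {n : ℕ} {g : Pt → ℝ}
    (h1 : ∀ x ∈ VJ p n, lapJ p n g x = (-1 : ℝ) * g x) (i : Fin 3) :
    g (Fw p (List.replicate n i) (cent p)) = 0 := by
  have hxG : p i ∈ VG p n := corner_mem_VG p n i
  have heq := h1 (p i) (Or.inl hxG)
  rw [lapJ, if_pos ⟨i, rfl⟩, adj_corner p hp n i (fun y => g y - g (p i))] at heq
  have h3 : (1:ℝ)⁻¹ = 1 := by norm_num
  rw [h3, one_mul] at heq
  linarith [heq]

lemma eig_pair {n : ℕ} {g : Pt → ℝ}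
    (h1 : ∀ x ∈ VJ p n, lapJ p n g x = (-1 : ℝ) * g x)
    {u : List (Fin 3)} {a b : Fin 3} {s : ℕ} (hab : a ≠ b)
    (hlen : (u ++ a :: List.replicate s b).length = n) :
    g (Fw p (u ++ a :: List.replicate s b) (cent p))
      + g (Fw p (u ++ b :: List.replicate s a) (cent p)) = 0 := by
  have hxG : Fw p (u ++ a :: List.replicate s b) (p b) ∈ VG p n := ⟨_, hlen, b, rfl⟩
  have heq := h1 _ (Or.inl hxG)
  have hnr : Fw p (u ++ a :: List.replicate s b) (p b) ∉ Set.range p := by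
    rintro ⟨i, hi⟩
    exact noncorner_not_corner p hp hab rfl i hi.symm
  rw [lapJ, if_neg hnr, if_neg (noncorner_not_VH p hp hlen),
    adj_noncorner p hp n hab hlen
      (fun y => g y - g (Fw p (u ++ a :: List.replicate s b) (p b)))] at heq
  linarith [heq]

/-- the centers vanish for an eigenfunction -/
lemma eig_centers {n : ℕ} {g : Pt → ℝ}
    (h1 : ∀ x ∈ VJ p n, lapJ p n g x = (-1 : ℝ) * g x) :
    ∀ x ∈ VH p n, g x = 0 := by
  rintro x ⟨w, hw, rfl⟩
  exact hanoi n (fun v => g (Fw p v (cent p)))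
    (fun u a b s hab hlen => eig_pair p hp h1 hab hlen)
    (fun i => eig_corner_center p hp h1 i) w hw

lemma set_eq_key (n : ℕ) :
    {g : Pt → ℝ | (∀ x ∉ VJ p n, g x = 0) ∧
        ∀ x ∈ VJ p n, lapJ p n g x = (-1 : ℝ) * g x}
      = {g : Pt → ℝ | (∀ x ∉ VJ p n, g x = 0) ∧ (∀ x ∈ VH p n, g x = 0) ∧
        ∀ x ∈ VH p n, (∑ᶠ y ∈ {y | adjJ p n x y}, g y) = 0} := by
  ext g
  simp only [Set.mem_setOf_eq]
  constructor
  · rintro ⟨h0, h1⟩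
    refine ⟨h0, eig_centers p hp h1, ?_⟩
    rintro x ⟨w, hw, rfl⟩
    show (∑ᶠ y ∈ {y | adjJ p n (Fw p w (cent p)) y}, g y) = 0
    rw [adj_center p hp n hw g]
    exact eig_cell_sum p hp h1 hw
  · rintro ⟨h0, hH, hS⟩
    refine ⟨h0, ?_⟩
    intro x hx
    rcases hx with hxG | hxH
    case inr =>
      obtain ⟨w, hw, rfl⟩ := hxH
      have hxH' : Fw p w (cent p) ∈ VH p n := ⟨w, hw, rfl⟩
      rw [lapJ, if_neg (VH_not_range p hp hxH'), if_pos hxH',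
        adj_center p hp n hw (fun y => g y - g (Fw p w (cent p)))]
      have hSx : (∑ᶠ y ∈ {y | adjJ p n (Fw p w (cent p)) y}, g y) = 0 := hS _ hxH'
      rw [adj_center p hp n hw g] at hSx
      have hg0 : g (Fw p w (cent p)) = 0 := hH _ hxH'
      rw [Fin.sum_univ_three] at hSx ⊢
      rw [hg0]
      linarith [hSx]
    case inl =>
      obtain ⟨w, hw, j, rfl⟩ := hxG
      by_cases hrep : w = List.replicate w.length j
      · have hxc : Fw p w (p j) = p j := by rw [hrep, Fw_replicate_self]
        rw [hxc]
        rw [lapJ, if_pos ⟨j, rfl⟩, adj_corner p hp n j (fun y => g y - g (p j))]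
        have hc0 : g (Fw p (List.replicate n j) (cent p)) = 0 :=
          hH _ ⟨List.replicate n j, by simp, rfl⟩
        rw [hc0]
        norm_num
      · obtain ⟨u, a, s, ha, hwd⟩ := exists_decomp hrep
        subst hwd
        have hnr : Fw p (u ++ a :: List.replicate s j) (p j) ∉ Set.range p := by
          rintro ⟨i, hi⟩
          exact noncorner_not_corner p hp ha rfl i hi.symm
        rw [lapJ, if_neg hnr, if_neg (noncorner_not_VH p hp hw),
          adj_noncorner p hp n ha hw
            (fun y => g y - g (Fw p (u ++ a :: List.replicate s j) (p j)))]
        have hc1 : g (Fw p (u ++ a :: List.replicate s j) (cent p)) = 0 :=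
          hH _ ⟨_, hw, rfl⟩
        have hc2 : g (Fw p (u ++ j :: List.replicate s a) (cent p)) = 0 :=
          hH _ ⟨_, by simpa using hw, rfl⟩
        rw [hc1, hc2]
        ring
omit hp in
lemma mem_VGfin_iff (n : ℕ) (x : Pt) :
    x ∈ Finset.image
        (fun a : List.Vector (Fin 3) n × Fin 3 => Fw p a.1.1 (p a.2)) Finset.univ
      ↔ x ∈ VG p n := by
  rw [Finset.mem_image]
  constructor
  · rintro ⟨⟨⟨w, hw⟩, j⟩, -, rfl⟩
    exact ⟨w, hw, j, rfl⟩
  · rintro ⟨w, hw, j, rfl⟩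
    exact ⟨(⟨w, hw⟩, j), Finset.mem_univ _, rfl⟩

/-- the finite vertex set of `G_n` -/
def VGfin (n : ℕ) : Finset Pt :=
  Finset.image (fun a : List.Vector (Fin 3) n × Fin 3 => Fw p a.1.1 (p a.2)) Finset.univ

/-- the eigenspace as a submodule -/
def Enn (n : ℕ) : Submodule ℝ (Pt → ℝ) where
  carrier := {g | (∀ x ∉ VG p n, g x = 0) ∧
    ∀ w : List.Vector (Fin 3) n, ∑ j : Fin 3, g (Fw p w.1 (p j)) = 0}
  add_mem' := by
    rintro g h ⟨hg1, hg2⟩ ⟨hh1, hh2⟩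
    refine ⟨fun x hx => by simp [hg1 x hx, hh1 x hx], fun w => ?_⟩
    simp only [Pi.add_apply, Finset.sum_add_distrib, hg2 w, hh2 w, add_zero]
  zero_mem' := ⟨fun x _ => rfl, fun w => by simp⟩
  smul_mem' := by
    rintro r g ⟨hg1, hg2⟩
    refine ⟨fun x hx => by simp [hg1 x hx], fun w => ?_⟩
    simp only [Pi.smul_apply, smul_eq_mul, ← Finset.mul_sum, hg2 w, mul_zero]

omit hp in
lemma vert_mem_VGfin (n : ℕ) (w : List.Vector (Fin 3) n) (j : Fin 3) :
    Fw p w.1 (p j) ∈ VGfin p n :=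
  Finset.mem_image.mpr ⟨(w, j), Finset.mem_univ _, rfl⟩

/-- the cell-sum linear map -/
def Psi (n : ℕ) : ({x // x ∈ VGfin p n} → ℝ) →ₗ[ℝ] (List.Vector (Fin 3) n → ℝ) where
  toFun f := fun w => ∑ j : Fin 3, f ⟨Fw p w.1 (p j), vert_mem_VGfin p n w j⟩
  map_add' f g := by funext w; simp [Finset.sum_add_distrib]
  map_smul' r f := by funext w; simp [Finset.mul_sum]

/-- restriction to the vertex set -/
def rho (n : ℕ) : Enn p n →ₗ[ℝ] ({x // x ∈ VGfin p n} → ℝ) where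
  toFun g := fun x => g.1 x.1
  map_add' f g := rfl
  map_smul' r f := rfl

omit hp in
lemma rho_inj (n : ℕ) : Function.Injective (rho p n) := by
  intro g h hgh
  ext x
  by_cases hx : x ∈ VG p n
  · have hx' : x ∈ VGfin p n := (mem_VGfin_iff p n x).mpr hx
    exact congrFun hgh ⟨x, hx'⟩
  · rw [g.2.1 x hx, h.2.1 x hx]

lemma range_rho (n : ℕ) : LinearMap.range (rho p n) = LinearMap.ker (Psi p n) := by
  ext f
  constructor
  · rintro ⟨g, rfl⟩
    simp only [LinearMap.mem_ker]
    funext w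
    exact g.2.2 w
  · intro hf
    rw [LinearMap.mem_ker] at hf
    refine ⟨⟨fun x => if hx : x ∈ VG p n then f ⟨x, (mem_VGfin_iff p n x).mpr hx⟩ else 0,
      fun x hx => dif_neg hx, fun w => ?_⟩, ?_⟩
    · have hmem : ∀ j : Fin 3, Fw p w.1 (p j) ∈ VG p n := fun j => ⟨w.1, w.2, j, rfl⟩
      have : ∀ j : Fin 3,
          (if hx : Fw p w.1 (p j) ∈ VG p n
            then f ⟨Fw p w.1 (p j), (mem_VGfin_iff p n _).mpr hx⟩ else 0)
          = f ⟨Fw p w.1 (p j), vert_mem_VGfin p n w j⟩ := by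
        intro j
        rw [dif_pos (hmem j)]
      rw [Finset.sum_congr rfl (fun j _ => this j)]
      exact congrFun hf w
    · funext x
      have hx : x.1 ∈ VG p n := (mem_VGfin_iff p n x.1).mp x.2
      show (if hx : x.1 ∈ VG p n then _ else 0) = f x
      rw [dif_pos hx]
lemma fiber_corner_finset (n : ℕ) (i : Fin 3) :
    Finset.univ.filter
        (fun q : List.Vector (Fin 3) n × Fin 3 => Fw p q.1.1 (p q.2) = p i)
      = {(⟨List.replicate n i, by simp⟩, i)} := by
  ext q
  simp only [Finset.mem_filter, Finset.mem_univ, true_and, Finset.mem_singleton]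
  constructor
  · intro h
    obtain ⟨h1, h2⟩ := fiber_corner p hp h
    have hq1 : q.1 = (⟨List.replicate n i, by simp⟩ : List.Vector (Fin 3) n) := by
      apply Subtype.ext
      rw [h1, q.1.2]
    rw [Prod.ext_iff]
    exact ⟨hq1, h2⟩
  · intro h
    rw [h]
    exact Fw_replicate_self p n i

lemma fiber_noncorner_finset (n : ℕ) {u : List (Fin 3)} {a j : Fin 3} {s : ℕ} (ha : a ≠ j)
    (hlen : (u ++ a :: List.replicate s j).length = n)
    (hlen2 : (u ++ j :: List.replicate s a).length = n) :
    Finset.univ.filter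
        (fun q : List.Vector (Fin 3) n × Fin 3 =>
          Fw p q.1.1 (p q.2) = Fw p (u ++ a :: List.replicate s j) (p j))
      = {(⟨u ++ a :: List.replicate s j, hlen⟩, j), (⟨u ++ j :: List.replicate s a, hlen2⟩, a)} := by
  ext q
  simp only [Finset.mem_filter, Finset.mem_univ, true_and, Finset.mem_insert,
    Finset.mem_singleton]
  constructor
  · intro h
    rcases fiber_noncorner p hp ha rfl (by rw [q.1.2, hlen]) h with ⟨h1, h2⟩ | ⟨h1, h2⟩
    · left
      rw [Prod.ext_iff]
      exact ⟨Subtype.ext h1, h2⟩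
    · right
      rw [Prod.ext_iff]
      exact ⟨Subtype.ext h1, h2⟩
  · rintro (h | h)
    · rw [h]
    · rw [h]
      exact (mirror_eq p hp u a j s).symm

lemma card_VGfin (n : ℕ) : 2 * (VGfin p n).card = 3 ^ (n + 1) + 3 := by
  classical
  have h0 := Finset.card_eq_sum_card_image
    (fun a : List.Vector (Fin 3) n × Fin 3 => Fw p a.1.1 (p a.2)) Finset.univ
  have hcardA : (Finset.univ : Finset (List.Vector (Fin 3) n × Fin 3)).card = 3 ^ (n + 1) := by
    rw [Finset.card_univ, Fintype.card_prod, card_vector, Fintype.card_fin, pow_succ]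
  have hfib : ∀ x ∈ VGfin p n,
      (Finset.univ.filter
        (fun a : List.Vector (Fin 3) n × Fin 3 => Fw p a.1.1 (p a.2) = x)).card
      = if x ∈ Set.range p then 1 else 2 := by
    intro x hx
    by_cases hr : x ∈ Set.range p
    · obtain ⟨i, rfl⟩ := hr
      rw [if_pos ⟨i, rfl⟩, fiber_corner_finset p hp n i, Finset.card_singleton]
    · rw [if_neg hr]
      obtain ⟨⟨⟨w, hw⟩, j⟩, -, hq0⟩ := Finset.mem_image.mp hx
      have hq : Fw p w (p j) = x := hq0
      have hrep : w ≠ List.replicate w.length j := by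
        intro hrepeq
        apply hr
        refine ⟨j, ?_⟩
        rw [← hq]
        conv_lhs => rw [← Fw_replicate_self p w.length j]
        rw [← hrepeq]
      obtain ⟨u, a, s, ha, hwd⟩ := exists_decomp hrep
      have hlen : (u ++ a :: List.replicate s j).length = n := by rw [← hwd]; exact hw
      have hlen2 : (u ++ j :: List.replicate s a).length = n := by
        rw [← hlen]; simp
      have hx2 : x = Fw p (u ++ a :: List.replicate s j) (p j) := by rw [← hq, hwd]
      rw [hx2, fiber_noncorner_finset p hp n ha hlen hlen2]
      refine Finset.card_pair ?_
      intro hpair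
      rw [Prod.ext_iff] at hpair
      exact mirror_ne ha (congrArg Subtype.val hpair.1).symm
  have himg : (Finset.image (fun a : List.Vector (Fin 3) n × Fin 3 => Fw p a.1.1 (p a.2))
      Finset.univ) = VGfin p n := rfl
  rw [himg] at h0
  rw [Finset.sum_congr rfl hfib] at h0
  have hcorner : (VGfin p n).filter (· ∈ Set.range p) = Finset.image p Finset.univ := by
    ext x
    simp only [Finset.mem_filter, Finset.mem_image, Finset.mem_univ, true_and]
    constructor
    · rintro ⟨-, i, rfl⟩; exact ⟨i, rfl⟩
    · rintro ⟨i, rfl⟩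
      exact ⟨(mem_VGfin_iff p n _).mpr (corner_mem_VG p n i), i, rfl⟩
  have hc3 : ((VGfin p n).filter (· ∈ Set.range p)).card = 3 := by
    rw [hcorner, Finset.card_image_of_injective _ hp.injective, Finset.card_univ,
      Fintype.card_fin]
  have hsplit := Finset.card_filter_add_card_filter_not
    (s := VGfin p n) (p := (· ∈ Set.range p))
  have hsum : ∑ x ∈ VGfin p n, (if x ∈ Set.range p then 1 else 2)
      = ((VGfin p n).filter (· ∈ Set.range p)).card * 1
        + ((VGfin p n).filter (fun x => ¬ x ∈ Set.range p)).card * 2 := by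
    rw [← Finset.sum_filter_add_sum_filter_not (VGfin p n) (· ∈ Set.range p)]
    congr 1
    · rw [Finset.sum_congr rfl (fun x hx => if_pos (Finset.mem_filter.mp hx).2),
        Finset.sum_const, smul_eq_mul]
    · rw [Finset.sum_congr rfl (fun x hx => if_neg (Finset.mem_filter.mp hx).2),
        Finset.sum_const, smul_eq_mul]
  rw [hcardA, hsum, hc3] at h0
  show 2 * (VGfin p n).card = 3 ^ (n + 1) + 3
  omega
lemma vertex_constraint (n : ℕ) (φ : ((List.Vector (Fin 3) n → ℝ) →ₗ[ℝ] ℝ))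
    (hvan : ∀ f, φ (Psi p n f) = 0)
    (hφt : ∀ t : List.Vector (Fin 3) n → ℝ,
      φ t = ∑ w, t w * φ (fun v => if w = v then 1 else 0))
    (x : Pt) (hx : x ∈ VGfin p n) :
    ∑ a ∈ Finset.univ.filter
        (fun a : List.Vector (Fin 3) n × Fin 3 => Fw p a.1.1 (p a.2) = x),
      φ (fun v => if a.1 = v then 1 else 0) = 0 := by
  classical
  set c : List.Vector (Fin 3) n → ℝ := fun w => φ (fun v => if w = v then 1 else 0) with hc
  have h1 := hvan (fun y => if (y : Pt) = x then 1 else 0)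
  rw [hφt] at h1
  have h2 : ∀ w : List.Vector (Fin 3) n,
      Psi p n (fun y => if (y : Pt) = x then 1 else 0) w
        = ∑ j : Fin 3, (if Fw p w.1 (p j) = x then (1:ℝ) else 0) := fun w => rfl
  rw [Finset.sum_congr rfl (fun w _ => by rw [h2 w])] at h1
  rw [Finset.sum_congr rfl (fun w (_ : w ∈ Finset.univ) => Finset.sum_mul _ _ (c w))] at h1
  rw [← Fintype.sum_prod_type'] at h1
  have h3 : ∀ a : List.Vector (Fin 3) n × Fin 3,
      (if Fw p a.1.1 (p a.2) = x then (1:ℝ) else 0) * c a.1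
        = if Fw p a.1.1 (p a.2) = x then c a.1 else 0 := by
    intro a; split <;> simp
  rw [Finset.sum_congr rfl (fun a _ => h3 a), Finset.sum_ite, Finset.sum_const_zero,
    add_zero] at h1
  exact h1

lemma Psi_surj (n : ℕ) : LinearMap.range (Psi p n) = ⊤ := by
  classical
  by_contra hne
  have hlt : LinearMap.range (Psi p n) < ⊤ := lt_top_iff_ne_top.mpr hne
  obtain ⟨φ, hφ0, hφ⟩ := Submodule.exists_dual_map_eq_bot_of_lt_top hlt inferInstance
  set c : List.Vector (Fin 3) n → ℝ := fun w => φ (fun v => if w = v then 1 else 0) with hc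
  have hφt : ∀ t : List.Vector (Fin 3) n → ℝ, φ t = ∑ w, t w * c w := by
    intro t
    conv_lhs => rw [pi_eq_sum_univ t]
    rw [map_sum]
    exact Finset.sum_congr rfl fun w _ => by rw [map_smul, smul_eq_mul]
  have hvan : ∀ f, φ (Psi p n f) = 0 := by
    intro f
    have hmem : φ (Psi p n f) ∈ (LinearMap.range (Psi p n)).map φ :=
      Submodule.mem_map_of_mem (LinearMap.mem_range_self _ f)
    rw [hφ] at hmem
    exact (Submodule.mem_bot ℝ).mp hmem
  -- corner constraints
  have hcorner : ∀ i : Fin 3, c ⟨List.replicate n i, by simp⟩ = 0 := by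
    intro i
    have h1 := vertex_constraint p hp n φ hvan hφt (p i)
      ((mem_VGfin_iff p n _).mpr (corner_mem_VG p n i))
    rw [fiber_corner_finset p hp n i, Finset.sum_singleton] at h1
    exact h1
  -- pair constraints
  have hpair : ∀ (u : List (Fin 3)) (a b : Fin 3) (s : ℕ), a ≠ b →
      ∀ (h1 : (u ++ a :: List.replicate s b).length = n)
        (h2 : (u ++ b :: List.replicate s a).length = n),
      c ⟨u ++ a :: List.replicate s b, h1⟩ + c ⟨u ++ b :: List.replicate s a, h2⟩ = 0 := by
    intro u a b s hab h1 h2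
    have hmem : Fw p (u ++ a :: List.replicate s b) (p b) ∈ VGfin p n :=
      vert_mem_VGfin p n ⟨u ++ a :: List.replicate s b, h1⟩ b
    have hv := vertex_constraint p hp n φ hvan hφt _ hmem
    rw [fiber_noncorner_finset p hp n hab h1 h2] at hv
    rw [Finset.sum_pair (by
      intro hpq
      rw [Prod.ext_iff] at hpq
      exact mirror_ne hab (congrArg Subtype.val hpq.1).symm)] at hv
    exact hv
  -- conclude c = 0 by the Hanoi propagation
  have hczero : ∀ w : List.Vector (Fin 3) n, c w = 0 := by
    have hcl := hanoi n (fun l => if h : l.length = n then c ⟨l, h⟩ else 0) ?_ ?_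
    · intro w
      have hthis := hcl w.1 w.2
      simp only [dif_pos w.2] at hthis
      exact hthis
    · intro u a b s hab hlen
      have hlen2 : (u ++ b :: List.replicate s a).length = n := by rw [← hlen]; simp
      simp only [dif_pos hlen, dif_pos hlen2]
      exact hpair u a b s hab hlen hlen2
    · intro j
      simp only [dif_pos (by simp : (List.replicate n j).length = n)]
      exact hcorner j
  apply hφ0
  refine LinearMap.ext fun t => ?_
  rw [hφt]
  simp [hczero]

lemma finrank_Enn (n : ℕ) : Module.finrank ℝ (Enn p n) = (3 ^ n + 3) / 2 := by
  classical
  haveI : FiniteDimensional ℝ (Enn p n) :=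
    FiniteDimensional.of_injective (rho p n) (rho_inj p n)
  have e1 : Module.finrank ℝ (Enn p n)
      = Module.finrank ℝ (LinearMap.ker (Psi p n)) := by
    have e := (LinearEquiv.ofInjective (rho p n) (rho_inj p n)).trans
      (LinearEquiv.ofEq _ _ (range_rho p hp n))
    exact e.finrank_eq
  have e2 := LinearMap.finrank_range_add_finrank_ker (Psi p n)
  rw [Psi_surj p hp n, finrank_top] at e2
  have e3 : Module.finrank ℝ (List.Vector (Fin 3) n → ℝ) = 3 ^ n := by
    rw [Module.finrank_pi, card_vector, Fintype.card_fin]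
  have e4 : Module.finrank ℝ ({x // x ∈ VGfin p n} → ℝ) = (VGfin p n).card := by
    rw [Module.finrank_pi, Fintype.card_coe]
  rw [e3, e4] at e2
  have e5 := card_VGfin p hp n
  have hpw : 0 < 3 ^ n := Nat.pow_pos (by norm_num)
  rw [e1]
  omega
lemma setB_eq_Enn (n : ℕ) :
    {g : Pt → ℝ | (∀ x ∉ VJ p n, g x = 0) ∧ (∀ x ∈ VH p n, g x = 0) ∧
        ∀ x ∈ VH p n, (∑ᶠ y ∈ {y | adjJ p n x y}, g y) = 0}
      = (Enn p n : Set (Pt → ℝ)) := by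
  ext g
  constructor
  · rintro ⟨h0, hH, hS⟩
    have c1 : ∀ x ∉ VG p n, g x = 0 := by
      intro x hx
      by_cases hxH : x ∈ VH p n
      · exact hH x hxH
      · exact h0 x (fun hxJ => by rcases hxJ with h | h; exacts [hx h, hxH h])
    have c2 : ∀ w : List.Vector (Fin 3) n, ∑ j : Fin 3, g (Fw p w.1 (p j)) = 0 := by
      intro w
      have hS' := hS _ ⟨w.1, w.2, rfl⟩
      rw [adj_center p hp n w.2 g] at hS'
      exact hS'
    exact ⟨c1, c2⟩
  · rintro ⟨h0, hcell⟩
    have hVHzero : ∀ x ∈ VH p n, g x = 0 :=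
      fun x hx => h0 x (VH_not_VG p hp hx)
    refine ⟨fun x hx => h0 x (fun hxG => hx (Or.inl hxG)), hVHzero, ?_⟩
    rintro x ⟨w, hw, rfl⟩
    rw [adj_center p hp n hw g]
    exact hcell ⟨w, hw⟩

end SG

/-- `-1` is an eigenvalue of `Δ^J_n` with eigenspace of dimension `(3^n+3)/2`,
consisting of exactly those functions vanishing at every `x ∈ V^H_n` and
with `Σ_{y ∼_{J_n} x} g(y) = 0` for every `x ∈ V^H_n`. -/
theorem J_eigenvalue_neg_one (p : Fin 3 → Pt) (hp : AffineIndependent ℝ p) (n : ℕ) :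
    (∃ g : Pt → ℝ, (∀ x ∉ VJ p n, g x = 0) ∧ (∃ x ∈ VJ p n, g x ≠ 0) ∧
      ∀ x ∈ VJ p n, lapJ p n g x = (-1 : ℝ) * g x) ∧
    ({g : Pt → ℝ | (∀ x ∉ VJ p n, g x = 0) ∧
        ∀ x ∈ VJ p n, lapJ p n g x = (-1 : ℝ) * g x}
      = {g : Pt → ℝ | (∀ x ∉ VJ p n, g x = 0) ∧ (∀ x ∈ VH p n, g x = 0) ∧
        ∀ x ∈ VH p n, (∑ᶠ y ∈ {y | adjJ p n x y}, g y) = 0}) ∧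
    ∃ b : Fin ((3 ^ n + 3) / 2) → (Pt → ℝ), LinearIndependent ℝ b ∧
      ∀ g : Pt → ℝ,
        g ∈ {g : Pt → ℝ | (∀ x ∉ VJ p n, g x = 0) ∧
              ∀ x ∈ VJ p n, lapJ p n g x = (-1 : ℝ) * g x} ↔
        g ∈ Submodule.span ℝ (Set.range b) := by
  classical
  have hsetEq := SG.set_eq_key p hp n
  have hB := SG.setB_eq_Enn p hp n
  have hd : Module.finrank ℝ (SG.Enn p n) = (3 ^ n + 3) / 2 := SG.finrank_Enn p hp n
  haveI : FiniteDimensional ℝ (SG.Enn p n) :=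
    FiniteDimensional.of_injective (SG.rho p n) (SG.rho_inj p n)
  let B := (Module.finBasis ℝ (SG.Enn p n)).reindex (finCongr hd)
  let b : Fin ((3 ^ n + 3) / 2) → (Pt → ℝ) := fun i => ((B i : SG.Enn p n) : Pt → ℝ)
  have hbi : LinearIndependent ℝ b :=
    B.linearIndependent.map' (SG.Enn p n).subtype (Submodule.ker_subtype _)
  have hspan : Submodule.span ℝ (Set.range b) = SG.Enn p n := by
    have h1 : Set.range b = (SG.Enn p n).subtype '' Set.range ⇑B := by
      rw [← Set.range_comp]; rfl
    rw [h1, Submodule.span_image, B.span_eq, Submodule.map_subtype_top]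
  have hmem_iff : ∀ g : Pt → ℝ,
      g ∈ {g : Pt → ℝ | (∀ x ∉ VJ p n, g x = 0) ∧
        ∀ x ∈ VJ p n, lapJ p n g x = (-1 : ℝ) * g x}
      ↔ g ∈ Submodule.span ℝ (Set.range b) := by
    intro g
    rw [hsetEq, hB, hspan]
    exact SetLike.mem_coe
  have hpos : 0 < (3 ^ n + 3) / 2 := by
    have h1 : 1 ≤ 3 ^ n := Nat.one_le_pow _ _ (by norm_num)
    omega
  refine ⟨?_, hsetEq, b, hbi, hmem_iff⟩
  set i0 : Fin ((3 ^ n + 3) / 2) := ⟨0, hpos⟩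
  have hgE : b i0 ∈ SG.Enn p n := (B i0).2
  have hgE' : b i0 ∈ {g : Pt → ℝ | (∀ x ∉ VJ p n, g x = 0) ∧
      ∀ x ∈ VJ p n, lapJ p n g x = (-1 : ℝ) * g x} := by
    rw [hsetEq, hB]
    exact hgE
  obtain ⟨h0, h1⟩ := hgE'
  have hbne : b i0 ≠ 0 := hbi.ne_zero i0
  have hex : ∃ x, b i0 x ≠ 0 := by
    by_contra h
    push_neg at h
    exact hbne (funext h)
  obtain ⟨x, hxne⟩ := hex
  have hxVJ : x ∈ VJ p n := by
    by_contra hxn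
    exact hxne (h0 x hxn)
  exact ⟨b i0, h0, ⟨x, hxVJ, hxne⟩, h1⟩

end
end

section
/- The only eigenfunction g of Δ^J_n satisfying g(x) = 0 for all x ∈ V^G_n and Σ_{y ∼_{J_n} x} g(y) = 0 for all x ∈ V^G_n is g ≡ 0; consequently there are no eigenfunctions of Δ^J_n with eigenvalue −1 vanishing on V^G_n. -/
noncomputable section
attribute [local instance] Classical.propDecidable

namespace NoJAux

lemma Fw_nil (p : Fin 3 → Pt) (z : Pt) : Fw p [] z = z := rfl

lemma Fw_cons (p : Fin 3 → Pt) (a : Fin 3) (w : List (Fin 3)) (z : Pt) :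
    Fw p (a :: w) z = Fmap p a (Fw p w z) := rfl

lemma Fw_append (p : Fin 3 → Pt) (u v : List (Fin 3)) (z : Pt) :
    Fw p (u ++ v) z = Fw p u (Fw p v z) := by
  induction u with
  | nil => simp [Fw_nil]
  | cons a u ih => simp [Fw_cons, ih]

lemma Fmap_fix (p : Fin 3 → Pt) (j : Fin 3) : Fmap p j (p j) = p j := by
  simp [Fmap, midpoint_self]

lemma Fw_replicate_fix (p : Fin 3 → Pt) (s : ℕ) (j : Fin 3) :
    Fw p (List.replicate s j) (p j) = p j := by
  induction s with
  | zero => rfl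
  | succ s ih => rw [List.replicate_succ, Fw_cons, ih, Fmap_fix]

lemma Fmap_inj (p : Fin 3 → Pt) (m : Fin 3) {x y : Pt} (h : Fmap p m x = Fmap p m y) :
    x = y := by
  unfold Fmap at h
  rw [midpoint_eq_midpoint_iff_vsub_eq_vsub] at h
  simp only [vsub_self] at h
  exact sub_eq_zero.1 (by simpa [vsub_eq_sub] using h)

lemma cross (p : Fin 3 → Pt) (u : List (Fin 3)) (k j : Fin 3) (s : ℕ) :
    Fw p (u ++ [k] ++ List.replicate s j) (p j) = Fw p (u ++ [j] ++ List.replicate s k) (p k) := by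
  rw [Fw_append, Fw_append, Fw_append, Fw_append, Fw_replicate_fix, Fw_replicate_fix]
  show Fw p u (Fmap p k (p j)) = Fw p u (Fmap p j (p k))
  unfold Fmap
  rw [midpoint_comm]

lemma rmid (x y : ℝ) : midpoint ℝ x y = (x + y) / 2 := by
  rw [midpoint_eq_smul_add, smul_eq_mul, invOf_eq_inv]
  ring

variable (b : AffineBasis (Fin 3) ℝ Pt)

lemma k_Fmap (i m : Fin 3) (x : Pt) :
    b.coord i (Fmap (⇑b) m x) = (b.coord i x + b.coord i (b m)) / 2 := by
  unfold Fmap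
  rw [(b.coord i).map_midpoint, rmid]

lemma k_self (i j : Fin 3) : b.coord i (b j) = if i = j then 1 else 0 := by
  rw [b.coord_apply]

lemma cent_eq : cent (⇑b) = Finset.univ.affineCombination ℝ (⇑b) (fun _ => (1:ℝ)/3) := by
  rw [Finset.univ.affineCombination_eq_linear_combination _ _ (by simp)]
  show (3:ℝ)⁻¹ • (b 0 + b 1 + b 2) = _
  rw [Fin.sum_univ_three]
  rw [smul_add, smul_add]
  norm_num

lemma k_cent (i : Fin 3) : b.coord i (cent (⇑b)) = 1/3 := by
  rw [cent_eq]
  exact b.coord_apply_combination_of_mem (Finset.mem_univ i) (by simp)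

def Good (x : Pt) : Prop := ∀ i, 0 ≤ b.coord i x ∧ b.coord i x ≤ 1

lemma good_corner (j : Fin 3) : Good b (b j) := by
  intro i; rw [k_self]; split <;> norm_num

lemma good_cent : Good b (cent (⇑b)) := by
  intro i; rw [k_cent]; norm_num

lemma good_Fmap (m : Fin 3) (x : Pt) (h : Good b x) : Good b (Fmap (⇑b) m x) := by
  intro i
  have h1 := h i
  have h2 := good_corner b m i
  rw [k_Fmap]
  constructor <;> linarith [h1.1, h1.2, h2.1, h2.2]

lemma good_Fw (w : List (Fin 3)) (z : Pt) (h : Good b z) : Good b (Fw (⇑b) w z) := by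
  induction w with
  | nil => exact h
  | cons a w ih => rw [Fw_cons]; exact good_Fmap b a _ ih

def Pos (x : Pt) : Prop := ∀ i, 0 < b.coord i x

lemma pos_cent : Pos b (cent (⇑b)) := by
  intro i; rw [k_cent]; norm_num

lemma pos_Fw (w : List (Fin 3)) (z : Pt) (h : Pos b z) : Pos b (Fw (⇑b) w z) := by
  induction w with
  | nil => exact h
  | cons a w ih =>
    intro i
    rw [Fw_cons, k_Fmap]
    have h2 := good_corner b a i
    have := ih i
    linarith [h2.1]

lemma coord_eq_one (a : Fin 3) (y : Pt) (hg : Good b y) (h1 : b.coord a y = 1) : y = b a := by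
  have hsum := b.sum_coord_apply_eq_one y
  have hz : ∀ i ∈ Finset.univ.erase a, b.coord i y = 0 := by
    have hnn : ∀ i ∈ Finset.univ.erase a, 0 ≤ b.coord i y := fun i _ => (hg i).1
    have hether : b.coord a y + ∑ i ∈ Finset.univ.erase a, b.coord i y = 1 := by
      rw [Finset.add_sum_erase Finset.univ (fun i => b.coord i y) (Finset.mem_univ a)]
      exact hsum
    have : ∑ i ∈ Finset.univ.erase a, b.coord i y = 0 := by linarith
    exact (Finset.sum_eq_zero_iff_of_nonneg hnn).1 this
  apply b.ext_elem
  intro i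
  rcases eq_or_ne i a with rfl | hia
  · rw [h1, k_self]; simp
  · rw [hz i (Finset.mem_erase.2 ⟨hia, Finset.mem_univ i⟩), k_self]
    simp [hia]

lemma corner_inj {j a : Fin 3} (h : (b j : Pt) = b a) : j = a := by
  have hth := congrArg (b.coord a) h
  rw [k_self, k_self, if_pos rfl] at hth
  by_cases hja : a = j
  · exact hja.symm
  · rw [if_neg hja] at hth; norm_num at hth

lemma eq_corner : ∀ (w : List (Fin 3)) (j a : Fin 3), Fw (⇑b) w (b j) = b a →
    w = List.replicate w.length a ∧ j = a := by
  intro w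
  induction w with
  | nil =>
    intro j a h
    rw [Fw_nil] at h
    exact ⟨rfl, corner_inj b h⟩
  | cons hd tl ih =>
    intro j a h
    rw [Fw_cons] at h
    set X := Fw (⇑b) tl (b j) with hX
    have hgood : Good b X := good_Fw b tl _ (good_corner b j)
    have hc := congrArg (b.coord a) h
    rw [k_Fmap, k_self, k_self, if_pos rfl] at hc
    by_cases hah : a = hd
    · rw [if_pos hah] at hc
      have hX1 : b.coord a X = 1 := by linarith
      have hXa : X = b a := coord_eq_one b a X hgood hX1
      obtain ⟨h1, h2⟩ := ih j a hXa
      subst hah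
      refine ⟨?_, h2⟩
      rw [List.length_cons, List.replicate_succ, ← h1]
    · exfalso
      rw [if_neg hah] at hc
      have := (hgood a).2
      linarith

lemma cent_inj : ∀ (w w' : List (Fin 3)), w.length = w'.length →
    Fw (⇑b) w (cent (⇑b)) = Fw (⇑b) w' (cent (⇑b)) → w = w' := by
  intro w
  induction w with
  | nil =>
    intro w' h _
    exact (List.length_eq_zero_iff.1 h.symm).symm
  | cons a w ih =>
    intro w' hlen heq
    cases w' with
    | nil => simp at hlen
    | cons c w'' =>
      rcases eq_or_ne a c with rfl | hac
      · rw [Fw_cons, Fw_cons] at heq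
        have := Fmap_inj _ _ heq
        rw [ih w'' (by simpa using hlen) this]
      · exfalso
        have hc := congrArg (b.coord a) heq
        rw [Fw_cons, Fw_cons, k_Fmap, k_Fmap, k_self, k_self, if_pos rfl, if_neg hac] at hc
        have hpos := pos_Fw b w _ (pos_cent b) a
        have hgood := (good_Fw b w'' _ (good_cent b) a).2
        linarith

lemma dyadic : ∀ (w : List (Fin 3)) (j i : Fin 3), ∃ m : ℤ,
    b.coord i (Fw (⇑b) w (b j)) * 2 ^ w.length = (m : ℝ) := by
  intro w
  induction w with
  | nil =>
    intro j i
    refine ⟨if i = j then 1 else 0, ?_⟩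
    rw [Fw_nil, k_self]
    split <;> simp
  | cons a w ih =>
    intro j i
    obtain ⟨m, hm⟩ := ih j i
    rcases eq_or_ne i a with rfl | hia
    · refine ⟨m + 2 ^ w.length, ?_⟩
      rw [Fw_cons, k_Fmap, k_self, if_pos rfl, List.length_cons, pow_succ]
      push_cast
      linear_combination hm
    · refine ⟨m, ?_⟩
      rw [Fw_cons, k_Fmap, k_self, if_neg hia, List.length_cons, pow_succ]
      linear_combination hm

lemma third : ∀ (w : List (Fin 3)) (i : Fin 3), ∃ m : ℤ,
    b.coord i (Fw (⇑b) w (cent (⇑b))) * 2 ^ w.length = (m : ℝ) + 1/3 := by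
  intro w
  induction w with
  | nil =>
    intro i
    exact ⟨0, by rw [Fw_nil, k_cent]; norm_num⟩
  | cons a w ih =>
    intro i
    obtain ⟨m, hm⟩ := ih i
    rcases eq_or_ne i a with rfl | hia
    · refine ⟨m + 2 ^ w.length, ?_⟩
      rw [Fw_cons, k_Fmap, k_self, if_pos rfl, List.length_cons, pow_succ]
      push_cast
      linear_combination hm
    · refine ⟨m, ?_⟩
      rw [Fw_cons, k_Fmap, k_self, if_neg hia, List.length_cons, pow_succ]
      linear_combination hm

lemma corner_ne_cent (w w' : List (Fin 3)) (h : w.length = w'.length) (j : Fin 3) :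
    Fw (⇑b) w (b j) ≠ Fw (⇑b) w' (cent (⇑b)) := by
  intro he
  obtain ⟨m, hm⟩ := dyadic b w j 0
  obtain ⟨m', hm'⟩ := third b w' 0
  rw [he, h] at hm
  rw [hm] at hm'
  have h3 : (3 * m : ℝ) = 3 * m' + 1 := by push_cast; linarith
  have : (3 * m : ℤ) = 3 * m' + 1 := by exact_mod_cast h3
  omega

lemma main_fwd : ∀ (w w' : List (Fin 3)), w.length = w'.length → ∀ (j k : Fin 3),
    Fw (⇑b) w (b j) = Fw (⇑b) w' (b k) →
    (w = w' ∧ j = k) ∨ ∃ u s, j ≠ k ∧ w = u ++ [k] ++ List.replicate s j ∧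
      w' = u ++ [j] ++ List.replicate s k := by
  intro w
  induction w with
  | nil =>
    intro w' hlen j k h
    obtain rfl : w' = [] := List.length_eq_zero_iff.1 hlen.symm
    rw [Fw_nil, Fw_nil] at h
    exact Or.inl ⟨rfl, corner_inj b h⟩
  | cons a w ih =>
    intro w' hlen j k h
    cases w' with
    | nil => simp at hlen
    | cons c w'' =>
      have hlen' : w.length = w''.length := by simpa using hlen
      rcases eq_or_ne a c with rfl | hac
      · rw [Fw_cons, Fw_cons] at h
        rcases ih w'' hlen' j k (Fmap_inj _ _ h) with ⟨rfl, rfl⟩ | ⟨u, s, hjk, hw, hw'⟩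
        · exact Or.inl ⟨rfl, rfl⟩
        · exact Or.inr ⟨a :: u, s, hjk, by rw [hw]; simp, by rw [hw']; simp⟩
      · set X := Fw (⇑b) w (b j) with hXdef
        set Y := Fw (⇑b) w'' (b k) with hYdef
        have hgX : Good b X := good_Fw b w _ (good_corner b j)
        have hgY : Good b Y := good_Fw b w'' _ (good_corner b k)
        have hca := congrArg (b.coord a) h
        have hcc := congrArg (b.coord c) h
        rw [Fw_cons, Fw_cons, k_Fmap, k_Fmap, k_self, k_self, if_pos rfl, if_neg hac] at hca
        rw [Fw_cons, Fw_cons, k_Fmap, k_Fmap, k_self, k_self,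
          if_neg (fun hh => hac hh.symm), if_pos rfl] at hcc
        have hYa : b.coord a Y = 1 := by
          have := (hgX a).1; have := (hgY a).2; linarith
        have hXc : b.coord c X = 1 := by
          have := (hgY c).1; have := (hgX c).2; linarith
        have hY : Y = b a := coord_eq_one b a Y hgY hYa
        have hX : X = b c := coord_eq_one b c X hgX hXc
        obtain ⟨hw'', hk⟩ := eq_corner b w'' k a hY
        obtain ⟨hw, hj⟩ := eq_corner b w j c hX
        subst hk; subst hj
        refine Or.inr ⟨[], w.length, fun hh => hac hh.symm, ?_, ?_⟩
        · simp only [List.nil_append, List.singleton_append]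
          exact congrArg (fun l => k :: l) hw
        · simp only [List.nil_append, List.singleton_append]
          rw [hlen']
          exact congrArg (fun l => j :: l) hw''

lemma decomp (w : List (Fin 3)) (j : Fin 3) :
    w = List.replicate w.length j ∨
      ∃ u k s, k ≠ j ∧ w = u ++ [k] ++ List.replicate s j := by
  induction w using List.reverseRecOn with
  | nil => left; rfl
  | append_singleton l a ih =>
    rcases eq_or_ne a j with rfl | haj
    · rcases ih with h | ⟨u, k, s, hk, h⟩
      · left
        rw [List.length_append, List.length_singleton]
        conv_lhs => rw [h]
        rw [List.replicate_succ']
      · right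
        exact ⟨u, k, s + 1, hk, by rw [h, List.replicate_succ', List.append_assoc]⟩
    · right
      exact ⟨l, a, 0, haj, by simp⟩

lemma rep_append {j : Fin 3} : ∀ (s s' : ℕ) (k m : Fin 3) (l l' : List (Fin 3)),
    k ≠ j → m ≠ j →
    List.replicate s j ++ k :: l = List.replicate s' j ++ m :: l' →
    s = s' ∧ k = m ∧ l = l' := by
  intro s
  induction s with
  | zero =>
    intro s' k m l l' hk _ h
    cases s' with
    | zero => simp at h; exact ⟨rfl, h.1, h.2⟩
    | succ s' =>
      rw [List.replicate_succ] at h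
      simp at h
      exact absurd h.1 hk
  | succ s ih =>
    intro s' k m l l' hk hm h
    cases s' with
    | zero =>
      rw [List.replicate_succ] at h
      simp at h
      exact absurd h.1.symm hm
    | succ s' =>
      rw [List.replicate_succ, List.replicate_succ] at h
      simp only [List.cons_append, List.cons.injEq] at h
      obtain ⟨s1, s2, s3⟩ := ih s' k m l l' hk hm h.2
      exact ⟨by omega, s2, s3⟩

lemma uniq {j k m : Fin 3} (u u' : List (Fin 3)) (s s' : ℕ) (hk : k ≠ j) (hm : m ≠ j)
    (h : u ++ [k] ++ List.replicate s j = u' ++ [m] ++ List.replicate s' j) :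
    u = u' ∧ k = m ∧ s = s' := by
  have h' := congrArg List.reverse h
  rw [List.reverse_append, List.reverse_append, List.reverse_append, List.reverse_append,
    List.reverse_replicate, List.reverse_replicate] at h'
  simp only [List.reverse_singleton, List.singleton_append] at h'
  obtain ⟨h1, h2, h3⟩ := rep_append s s' k m u.reverse u'.reverse hk hm h'
  exact ⟨List.reverse_injective h3, h2, h1⟩

lemma nbr1 (n : ℕ) (j : Fin 3) :
    {y | adjJ (⇑b) n (b j) y} = {Fw (⇑b) (List.replicate n j) (cent (⇑b))} := by
  ext y
  simp only [Set.mem_setOf_eq, Set.mem_singleton_iff]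
  constructor
  · rintro ⟨w₁, hlen, m, (⟨hx, hy⟩ | ⟨hy, hx⟩)⟩
    · exfalso
      refine corner_ne_cent b (List.replicate n j) w₁ (by simp [hlen]) j ?_
      rw [Fw_replicate_fix]
      exact hx
    · rw [show (b j : Pt) = Fw (⇑b) (List.replicate n j) (b j) from
        (Fw_replicate_fix (⇑b) n j).symm] at hx
      rcases main_fwd b (List.replicate n j) w₁ (by simp [hlen]) j m hx with
        ⟨hw, _⟩ | ⟨u, s, hjm, h1, h2⟩
      · rw [hy, ← hw]
      · exfalso
        have hmem : m ∈ List.replicate n j := by rw [h1]; simp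
        exact hjm (List.eq_of_mem_replicate hmem).symm
  · rintro rfl
    exact ⟨List.replicate n j, by simp, j, Or.inr ⟨rfl, (Fw_replicate_fix (⇑b) n j).symm⟩⟩

lemma nbr2 (n : ℕ) (u : List (Fin 3)) (k j : Fin 3) (s : ℕ) (hkj : k ≠ j)
    (hlen : (u ++ [k] ++ List.replicate s j).length = n) :
    {y | adjJ (⇑b) n (Fw (⇑b) (u ++ [k] ++ List.replicate s j) (b j)) y} =
      {Fw (⇑b) (u ++ [k] ++ List.replicate s j) (cent (⇑b)),
       Fw (⇑b) (u ++ [j] ++ List.replicate s k) (cent (⇑b))} := by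
  have hlenv : (u ++ [j] ++ List.replicate s k).length = n := by
    simp at hlen ⊢; omega
  ext y
  simp only [Set.mem_setOf_eq, Set.mem_insert_iff, Set.mem_singleton_iff]
  constructor
  · rintro ⟨w₁, hl1, m, (⟨hx, hy⟩ | ⟨hy, hx⟩)⟩
    · exact absurd hx (corner_ne_cent b _ w₁ (hlen.trans hl1.symm) j)
    · rcases main_fwd b _ w₁ (hlen.trans hl1.symm) j m hx with
        ⟨hw, _⟩ | ⟨u', s', hjm, h1, h2⟩
      · left; rw [hy, ← hw]
      · obtain ⟨hu, hk, hs⟩ := uniq u u' s s' hkj (Ne.symm hjm) h1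
        right
        rw [hy, h2, ← hu, ← hk, ← hs]
  · rintro (rfl | rfl)
    · exact ⟨_, hlen, j, Or.inr ⟨rfl, rfl⟩⟩
    · exact ⟨_, hlenv, k, Or.inr ⟨rfl, cross (⇑b) u k j s⟩⟩

end NoJAux

/-- The only function `g` vanishing on `V^G_n` whose `J_n`-neighbor sums vanish
at every `x ∈ V^G_n` is `g ≡ 0` on `V^J_n`; consequently there is no
eigenfunction of `Δ^J_n` with eigenvalue `-1` vanishing on `V^G_n`. -/


theorem no_J_eigenfunction_vanishing_on_G (p : Fin 3 → Pt)
    (hp : AffineIndependent ℝ p) (n : ℕ) :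
    (∀ g : Pt → ℝ, (∀ x ∈ VG p n, g x = 0) →
      (∀ x ∈ VG p n, (∑ᶠ y ∈ {y | adjJ p n x y}, g y) = 0) →
      ∀ x ∈ VJ p n, g x = 0) ∧
    ¬ ∃ g : Pt → ℝ, (∃ x ∈ VJ p n, g x ≠ 0) ∧ (∀ x ∈ VG p n, g x = 0) ∧
        ∀ x ∈ VJ p n, lapJ p n g x = (-1 : ℝ) * g x := by
  have htot : affineSpan ℝ (Set.range p) = ⊤ := by
    rw [hp.affineSpan_eq_top_iff_card_eq_finrank_add_one]
    simp [Module.finrank_prod]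
  set b : AffineBasis (Fin 3) ℝ Pt := ⟨p, hp, htot⟩ with hb
  have hpb : p = ⇑b := rfl
  rw [hpb]
  have part1 : ∀ g : Pt → ℝ, (∀ x ∈ VG (⇑b) n, g x = 0) →
      (∀ x ∈ VG (⇑b) n, (∑ᶠ y ∈ {y | adjJ (⇑b) n x y}, g y) = 0) →
      ∀ x ∈ VJ (⇑b) n, g x = 0 := by
    intro g hg0 hsum x hx
    rcases hx with hx | hx
    · exact hg0 x hx
    · obtain ⟨w, hlen, rfl⟩ := hx
      have H1 : ∀ j : Fin 3, g (Fw (⇑b) (List.replicate n j) (cent (⇑b))) = 0 := by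
        intro j
        have hmem : (b j : Pt) ∈ VG (⇑b) n :=
          ⟨List.replicate n j, by simp, j, (NoJAux.Fw_replicate_fix (⇑b) n j).symm⟩
        have h := hsum _ hmem
        rwa [NoJAux.nbr1 b n j, finsum_mem_singleton] at h
      have H2 : ∀ (u : List (Fin 3)) (k j : Fin 3) (s : ℕ), k ≠ j →
          (u ++ [k] ++ List.replicate s j).length = n →
          g (Fw (⇑b) (u ++ [k] ++ List.replicate s j) (cent (⇑b))) +
            g (Fw (⇑b) (u ++ [j] ++ List.replicate s k) (cent (⇑b))) = 0 := by
        intro u k j s hkj hlen'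
        have hmem : Fw (⇑b) (u ++ [k] ++ List.replicate s j) (b j) ∈ VG (⇑b) n :=
          ⟨_, hlen', j, rfl⟩
        have h := hsum _ hmem
        have hne : Fw (⇑b) (u ++ [k] ++ List.replicate s j) (cent (⇑b)) ≠
            Fw (⇑b) (u ++ [j] ++ List.replicate s k) (cent (⇑b)) := by
          intro he
          have heq := NoJAux.cent_inj b _ _ (by simp) he
          rw [List.append_assoc, List.append_assoc] at heq
          have h2 := List.append_cancel_left heq
          simp only [List.singleton_append, List.cons.injEq] at h2
          exact hkj h2.1
        rwa [NoJAux.nbr2 b n u k j s hkj hlen', finsum_mem_pair hne] at h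
      have key : ∀ (m : ℕ) (u w' : List (Fin 3)) (jj : Fin 3), u.length + m = n →
          w'.length = m →
          |g (Fw (⇑b) (u ++ w') (cent (⇑b)))| =
            |g (Fw (⇑b) (u ++ List.replicate m jj) (cent (⇑b)))| := by
        intro m
        induction m with
        | zero =>
          intro u w' jj _ hw'
          rw [List.length_eq_zero_iff.1 hw']
          rfl
        | succ m ih =>
          intro u w' jj hu hw'
          obtain ⟨a, w'', rfl⟩ : ∃ a t, w' = a :: t := by
            cases w' with
            | nil => simp at hw'
            | cons a t => exact ⟨a, t, rfl⟩
          have hw'' : w''.length = m := by simpa using hw'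
          have hlen2 : ∀ c : Fin 3, (u ++ [c]).length + m = n := by
            intro c; simp at hu ⊢; omega
          have e1 : u ++ a :: w'' = (u ++ [a]) ++ w'' := by simp
          have e2 : u ++ List.replicate (m+1) jj = (u ++ [jj]) ++ List.replicate m jj := by
            rw [List.replicate_succ]; simp
          rcases eq_or_ne a jj with rfl | ha
          · rw [e1, e2]
            exact ih (u ++ [a]) w'' a (hlen2 a) hw''
          · have step1 := ih (u ++ [a]) w'' jj (hlen2 a) hw''
            have step2 : |g (Fw (⇑b) ((u ++ [a]) ++ List.replicate m jj) (cent (⇑b)))| =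
                |g (Fw (⇑b) ((u ++ [jj]) ++ List.replicate m a) (cent (⇑b)))| := by
              have hz := H2 u a jj m ha (by simp at hu ⊢; omega)
              have hneg : g (Fw (⇑b) (u ++ [a] ++ List.replicate m jj) (cent (⇑b))) =
                  -g (Fw (⇑b) (u ++ [jj] ++ List.replicate m a) (cent (⇑b))) :=
                eq_neg_of_add_eq_zero_left hz
              rw [show ((u ++ [a]) ++ List.replicate m jj) =
                (u ++ [a] ++ List.replicate m jj) from rfl, hneg, abs_neg]
            have step3 := ih (u ++ [jj]) (List.replicate m a) jj (hlen2 jj) (by simp)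
            rw [e1, step1, step2, step3, e2]
      have h0 := key n [] w 0 (by simp [hlen]) hlen
      simp only [List.nil_append] at h0
      rw [H1 0, abs_zero] at h0
      exact abs_eq_zero.1 h0
  refine ⟨part1, ?_⟩
  rintro ⟨g, ⟨x0, hx0, hgx0⟩, hvan, heig⟩
  refine hgx0 (part1 g hvan ?_ x0 hx0)
  intro x hx
  have hgx : g x = 0 := hvan x hx
  have h := heig x (Or.inl hx)
  rw [hgx, mul_zero] at h
  unfold lapJ at h
  have hd : (if x ∈ Set.range ⇑b then (1:ℝ) else if x ∈ VH (⇑b) n then 3 else 2) ≠ 0 := by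
    split_ifs <;> norm_num
  have hsum0 : ∑ᶠ y ∈ {y | adjJ (⇑b) n x y}, (g y - g x) = 0 := by
    rcases mul_eq_zero.1 h with h1 | h1
    · exact absurd h1 (inv_ne_zero hd)
    · exact h1
  simpa [hgx, sub_zero] using hsum0
end
end

section
/- The map ζ ↦ (4/3)ζ is a bijection from σ(Δ^G_n) \ {−3/2} onto σ(Δ^H_n) \ {−2}. -/
noncomputable section
attribute [local instance] Classical.propDecidable

/-- The spectrum of `Δ^G_n`. -/
def specG (p : Fin 3 → Pt) (n : ℕ) : Set ℝ :=
  {z | ∃ f : Pt → ℝ, (∃ x ∈ VG p n, f x ≠ 0) ∧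
    ∀ x ∈ VG p n, lapG p n f x = z * f x}

/-- The spectrum of `Δ^H_n`. -/
def specH (p : Fin 3 → Pt) (n : ℕ) : Set ℝ :=
  {z | ∃ f : Pt → ℝ, (∃ x ∈ VH p n, f x ≠ 0) ∧
    ∀ x ∈ VH p n, lapH p n f x = z * f x}

namespace SGH

abbrev F3 := Fin 3

def ev (i l : F3) : ℝ := if l = i then 1 else 0

def Tv : List F3 → F3 → F3 → ℝ
  | [], j, l => ev j l
  | i :: w, j, l => (ev i l + Tv w j l) / 2

def Tc : List F3 → F3 → ℝ
  | [], _ => 1/3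
  | i :: w, l => (ev i l + Tc w l) / 2

@[simp] lemma Tv_nil (j : F3) : Tv [] j = ev j := rfl
@[simp] lemma Tv_cons (i : F3) (w : List F3) (j l : F3) :
    Tv (i :: w) j l = (ev i l + Tv w j l) / 2 := rfl
@[simp] lemma Tc_nil (l : F3) : Tc [] l = 1/3 := rfl
@[simp] lemma Tc_cons (i : F3) (w : List F3) (l : F3) :
    Tc (i :: w) l = (ev i l + Tc w l) / 2 := rfl

lemma ev_self (i : F3) : ev i i = 1 := if_pos rfl

lemma ev_nonneg (i l : F3) : 0 ≤ ev i l := by unfold ev; split <;> norm_num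

lemma ev_le_one (i l : F3) : ev i l ≤ 1 := by unfold ev; split <;> norm_num

lemma ev_sum (i : F3) : ∑ l, ev i l = 1 := by simp [ev]

lemma ev_inj {i j : F3} (h : ev i = ev j) : i = j := by
  by_contra hne
  have h2 := congrFun h i
  rw [ev_self] at h2
  unfold ev at h2
  rw [if_neg hne] at h2
  norm_num at h2

lemma Tv_nonneg : ∀ (w : List F3) (j l : F3), 0 ≤ Tv w j l
  | [], j, l => ev_nonneg j l
  | i :: w, j, l => by
      have h1 := Tv_nonneg w j l
      have h2 := ev_nonneg i l
      rw [Tv_cons]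
      positivity

lemma Tv_sum : ∀ (w : List F3) (j : F3), ∑ l, Tv w j l = 1
  | [], j => ev_sum j
  | i :: w, j => by
      simp only [Tv_cons]
      rw [← Finset.sum_div, Finset.sum_add_distrib, ev_sum, Tv_sum w j]
      norm_num

lemma Tv_le_one (w : List F3) (j l : F3) : Tv w j l ≤ 1 := by
  have h := Tv_sum w j
  have h2 : Tv w j l ≤ ∑ l', Tv w j l' :=
    Finset.single_le_sum (fun l' _ => Tv_nonneg w j l') (Finset.mem_univ l)
  linarith

lemma Tv_eq_ev_of_one {w : List F3} {j l : F3} (h : Tv w j l = 1) : Tv w j = ev l := by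
  funext l'
  by_cases hl : l' = l
  · rw [hl, h, ev_self]
  · have hsum := Tv_sum w j
    rw [← Finset.sum_erase_add _ _ (Finset.mem_univ l), h] at hsum
    have h0 : ∑ x ∈ Finset.univ.erase l, Tv w j x = 0 := by linarith
    have h3 := (Finset.sum_eq_zero_iff_of_nonneg (fun x _ => Tv_nonneg w j x)).1 h0 l'
      (Finset.mem_erase.2 ⟨hl, Finset.mem_univ l'⟩)
    rw [h3]
    unfold ev
    rw [if_neg hl]

lemma Tv_eq_ev : ∀ (w : List F3) (j i : F3), Tv w j = ev i →
    w = List.replicate w.length i ∧ j = i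
  | [], j, i, h => ⟨rfl, ev_inj h⟩
  | i₀ :: w, j, i, h => by
      have hi₀ : (ev i₀ i₀ + Tv w j i₀) / 2 = ev i i₀ := congrFun h i₀
      rw [ev_self] at hi₀
      have hnn := Tv_nonneg w j i₀
      have hle := Tv_le_one w j i₀
      have hii : i₀ = i := by
        by_contra hne
        have hz : ev i i₀ = 0 := if_neg hne
        rw [hz] at hi₀; linarith
      subst hii
      rw [ev_self] at hi₀
      have h1 : Tv w j i₀ = 1 := by linarith
      have h2 := Tv_eq_ev_of_one h1
      obtain ⟨hw, hj⟩ := Tv_eq_ev w j i₀ h2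
      exact ⟨by simp [List.length_cons, List.replicate_succ, ← hw], hj⟩

lemma Tv_replicate (s : ℕ) (j : F3) : Tv (List.replicate s j) j = ev j := by
  induction s with
  | zero => rfl
  | succ m ih =>
      funext l
      rw [List.replicate_succ, Tv_cons, ih]; ring

lemma Tv_append_congr (a : List F3) {u u' : List F3} {j j' : F3}
    (h : Tv u j = Tv u' j') : Tv (a ++ u) j = Tv (a ++ u') j' := by
  induction a with
  | nil => simpa using h
  | cons i a ih =>
      funext l
      rw [List.cons_append, List.cons_append, Tv_cons, Tv_cons, ih]

lemma Tv_base_swap (s : ℕ) (j k : F3) :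
    Tv (k :: List.replicate s j) j = Tv (j :: List.replicate s k) k := by
  funext l
  rw [Tv_cons, Tv_cons, Tv_replicate, Tv_replicate]; ring

/-! ### The swap function -/

def swAux (j : F3) : List F3 → Option (List F3 × F3)
  | [] => none
  | i :: r => if i = j then (swAux j r).map (fun vk => (vk.2 :: vk.1, vk.2)) else some (j :: r, i)

def cSwap (w : List F3) (j : F3) : List F3 × F3 :=
  match swAux j w.reverse with
  | none => (w, j)
  | some (v, k) => (v.reverse, k)

lemma swAux_struct {j : F3} : ∀ {l v : List F3} {k : F3}, swAux j l = some (v, k) →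
    ∃ (s : ℕ) (b : List F3), k ≠ j ∧ l = List.replicate s j ++ k :: b ∧
      v = List.replicate s k ++ j :: b
  | [], v, k, h => by simp [swAux] at h
  | i :: r, v, k, h => by
      by_cases hij : i = j
      · rw [swAux, if_pos hij] at h
        match hr : swAux j r with
        | none => rw [hr] at h; simp at h
        | some (v', k') =>
            rw [hr] at h
            simp only [Option.map_some, Option.some.injEq, Prod.mk.injEq] at h
            obtain ⟨hv, hk⟩ := h
            obtain ⟨s, b, hkj, hl, hvv⟩ := swAux_struct hr
            subst hk hij
            exact ⟨s + 1, b, hkj, by simp [List.replicate_succ, hl],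
              by simp [List.replicate_succ, ← hv, hvv]⟩
      · rw [swAux, if_neg hij] at h
        simp only [Option.some.injEq, Prod.mk.injEq] at h
        obtain ⟨hv, hk⟩ := h
        exact ⟨0, r, hk ▸ hij, by simp [← hk], by simp [← hv]⟩

lemma swAux_none_iff {j : F3} : ∀ {l : List F3},
    swAux j l = none ↔ l = List.replicate l.length j
  | [] => by simp [swAux]
  | i :: r => by
      constructor
      · intro h
        by_cases hij : i = j
        · rw [swAux, if_pos hij] at h
          have hr0 : swAux j r = none := by
            match hr : swAux j r with
            | none => rfl
            | some (v, k) => rw [hr] at h; simp at h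
          have h2 := swAux_none_iff.1 hr0
          simp [List.replicate_succ, hij, ← h2]
        · rw [swAux, if_neg hij] at h; simp at h
      · intro h
        simp only [List.length_cons, List.replicate_succ, List.cons.injEq] at h
        obtain ⟨hij, hr⟩ := h
        rw [swAux, if_pos hij, swAux_none_iff.2 hr]
        rfl

lemma swAux_k_ne {j : F3} {l v : List F3} {k : F3} (h : swAux j l = some (v, k)) : k ≠ j :=
  (swAux_struct h).choose_spec.choose_spec.1

lemma swAux_v_ne {j : F3} {l v : List F3} {k : F3} (h : swAux j l = some (v, k)) : v ≠ l := by
  obtain ⟨s, b, hkj, hl, hv⟩ := swAux_struct h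
  subst hl hv
  intro heq
  cases s with
  | zero =>
      simp only [List.replicate, List.nil_append, List.cons.injEq] at heq
      exact hkj heq.1.symm
  | succ m =>
      simp only [List.replicate_succ, List.cons_append, List.cons.injEq] at heq
      exact hkj heq.1

lemma swAux_length {j : F3} {l v : List F3} {k : F3} (h : swAux j l = some (v, k)) :
    v.length = l.length := by
  obtain ⟨s, b, _, hl, hv⟩ := swAux_struct h
  subst hl hv; simp

lemma swAux_cell_inj {j b : F3} : ∀ {l m : List F3} {j' b' : F3},
    swAux j l = some (m, j') → swAux b l = some (m, b') → j = b
  | [], m, j', b', h1, _ => by simp [swAux] at h1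
  | x :: r, m, j', b', h1, h2 => by
      by_cases hxj : x = j <;> by_cases hxb : x = b
      · exact hxj ▸ hxb.symm ▸ rfl
      · rw [swAux, if_pos hxj] at h1
        rw [swAux, if_neg hxb] at h2
        simp only [Option.some.injEq, Prod.mk.injEq] at h2
        match hr : swAux j r with
        | none => rw [hr] at h1; simp at h1
        | some (v, k) =>
            rw [hr] at h1
            simp only [Option.map_some, Option.some.injEq, Prod.mk.injEq] at h1
            have hm2 := h2.1
            rw [← h1.1] at hm2
            injection hm2 with hk hv
            exact absurd hv.symm (swAux_v_ne hr)
      · rw [swAux, if_neg hxj] at h1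
        rw [swAux, if_pos hxb] at h2
        simp only [Option.some.injEq, Prod.mk.injEq] at h1
        match hr : swAux b r with
        | none => rw [hr] at h2; simp at h2
        | some (v, k) =>
            rw [hr] at h2
            simp only [Option.map_some, Option.some.injEq, Prod.mk.injEq] at h2
            have hm1 := h1.1
            rw [← h2.1] at hm1
            injection hm1 with hk hv
            exact absurd hv.symm (swAux_v_ne hr)
      · rw [swAux, if_neg hxj] at h1
        rw [swAux, if_neg hxb] at h2
        simp only [Option.some.injEq, Prod.mk.injEq] at h1 h2
        have h3 : j :: r = b :: r := h1.1.trans h2.1.symm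
        exact ((List.cons.injEq _ _ _ _).mp h3).1

lemma swAux_append_some {j i : F3} : ∀ {l v : List F3} {k : F3},
    swAux j l = some (v, k) → swAux j (l ++ [i]) = some (v ++ [i], k)
  | [], v, k, h => by simp [swAux] at h
  | x :: r, v, k, h => by
      by_cases hxj : x = j
      · rw [swAux, if_pos hxj] at h
        match hr : swAux j r with
        | none => rw [hr] at h; simp at h
        | some (v', k') =>
            rw [hr] at h
            simp only [Option.map_some, Option.some.injEq, Prod.mk.injEq] at h
            obtain ⟨hv, hk⟩ := h
            show swAux j (x :: (r ++ [i])) = _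
            rw [swAux, if_pos hxj, swAux_append_some hr]
            simp [← hv, hk]
      · rw [swAux, if_neg hxj] at h
        simp only [Option.some.injEq, Prod.mk.injEq] at h
        obtain ⟨hv, hk⟩ := h
        show swAux j (x :: (r ++ [i])) = _
        rw [swAux, if_neg hxj]
        simp [← hv, hk]

lemma swAux_replicate_append {j i : F3} (hij : i ≠ j) (s : ℕ) (b : List F3) :
    swAux j (List.replicate s j ++ i :: b) = some (List.replicate s i ++ j :: b, i) := by
  induction s with
  | zero => simp [swAux, hij]
  | succ m ih =>
      rw [List.replicate_succ, List.cons_append, swAux, if_pos rfl, ih]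
      simp [List.replicate_succ]

lemma cSwap_length (w : List F3) (j : F3) : (cSwap w j).1.length = w.length := by
  unfold cSwap
  match h : swAux j w.reverse with
  | none => rfl
  | some (v, k) =>
      have h2 := swAux_length h
      simp [h2]

lemma cSwap_eq_self_iff {w : List F3} {j : F3} :
    cSwap w j = (w, j) ↔ w = List.replicate w.length j := by
  constructor
  · intro h
    unfold cSwap at h
    match hs : swAux j w.reverse with
    | none =>
        have h1 : w.reverse = List.replicate w.reverse.length j := swAux_none_iff.1 hs
        conv_lhs => rw [← List.reverse_reverse w, h1]
        simp [List.reverse_replicate]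
    | some (v, k) =>
        rw [hs] at h
        have h2 : ((v.reverse, k) : List F3 × F3) = (w, j) := h
        injection h2 with _ hk
        exact absurd hk (swAux_k_ne hs)
  · intro h
    unfold cSwap
    have hn : swAux j w.reverse = none := by
      rw [swAux_none_iff]
      conv_lhs => rw [h]
      simp [List.reverse_replicate]
    rw [hn]

lemma cSwap_fst_eq_iff {w : List F3} {j : F3} (h : (cSwap w j).1 = w) : cSwap w j = (w, j) := by
  unfold cSwap at h ⊢
  match hs : swAux j w.reverse with
  | none => rfl
  | some (v, k) =>
      rw [hs] at h
      have h2 : v.reverse = w := h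
      have h3 : v = w.reverse := by rw [← h2, List.reverse_reverse]
      exact absurd h3 (swAux_v_ne hs)

lemma cSwap_dichotomy (w : List F3) (j : F3) :
    cSwap w j = (w, j) ∨ (cSwap w j).1 ≠ w := by
  by_cases h : (cSwap w j).1 = w
  · exact Or.inl (cSwap_fst_eq_iff h)
  · exact Or.inr h

lemma cSwap_cell_inj {w : List F3} {j b : F3}
    (h : (cSwap w j).1 = (cSwap w b).1) (hne : (cSwap w j).1 ≠ w) : j = b := by
  unfold cSwap at h hne
  match hs : swAux j w.reverse with
  | none => rw [hs] at hne; exact absurd rfl hne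
  | some (v, k) =>
      rw [hs] at h
      match hs2 : swAux b w.reverse with
      | none =>
          rw [hs2] at h
          have h2 : v.reverse = w := h
          have h3 : v = w.reverse := by rw [← h2, List.reverse_reverse]
          exact absurd h3 (swAux_v_ne hs)
      | some (v', k') =>
          rw [hs2] at h
          have h2 : v.reverse = v'.reverse := h
          have hv : v = v' := by
            rw [← List.reverse_reverse v, h2, List.reverse_reverse]
          exact swAux_cell_inj hs (hv ▸ hs2)

lemma Tv_cSwap (w : List F3) (j : F3) : Tv (cSwap w j).1 (cSwap w j).2 = Tv w j := by
  unfold cSwap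
  match hs : swAux j w.reverse with
  | none => rfl
  | some (v, k) =>
      simp only
      obtain ⟨s, b, hkj, hl, hv⟩ := swAux_struct hs
      have hw : w = b.reverse ++ k :: List.replicate s j := by
        conv_lhs => rw [← List.reverse_reverse w, hl]
        simp [List.reverse_replicate]
      have hv' : v.reverse = b.reverse ++ j :: List.replicate s k := by
        rw [hv]; simp [List.reverse_replicate]
      rw [hv']
      conv_rhs => rw [hw]
      exact Tv_append_congr b.reverse (Tv_base_swap s j k).symm

/-- The main completeness lemma. -/
lemma Tv_eq_cases : ∀ (w v : List F3), w.length = v.length → ∀ (j b : F3),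
    Tv w j = Tv v b → ((w, j) = (v, b) ∨ cSwap w j = (v, b))
  | [], [], _, j, b, h => by
      left
      have h2 : ev j = ev b := by funext l; exact congrFun h l
      rw [ev_inj h2]
  | [], _ :: _, hlen, _, _, _ => by simp at hlen
  | _ :: _, [], hlen, _, _, _ => by simp at hlen
  | i :: w₁, i' :: v₁, hlen, j, b, h => by
      have hlen' : w₁.length = v₁.length := by simpa using hlen
      have hpt : ∀ l, (ev i l + Tv w₁ j l) = (ev i' l + Tv v₁ b l) := by
        intro l
        have h2 := congrFun h l
        rw [Tv_cons, Tv_cons] at h2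
        linarith
      by_cases hii : i = i'
      · subst hii
        have htv : Tv w₁ j = Tv v₁ b := by
          funext l; have h2 := hpt l; linarith
        rcases Tv_eq_cases w₁ v₁ hlen' j b htv with heq | hsw
        · left
          injection heq with h1 h2
          rw [h1, h2]
        · unfold cSwap at hsw
          match hs : swAux j w₁.reverse with
          | none =>
              rw [hs] at hsw
              have hsw' : ((w₁, j) : List F3 × F3) = (v₁, b) := hsw
              injection hsw' with h1 h2
              left
              rw [h1, h2]
          | some (u, k) =>
              rw [hs] at hsw
              have hsw' : ((u.reverse, k) : List F3 × F3) = (v₁, b) := hsw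
              injection hsw' with h1 h2
              right
              unfold cSwap
              rw [show (i :: w₁).reverse = w₁.reverse ++ [i] from by simp,
                swAux_append_some hs]
              show ((u ++ [i]).reverse, k) = (i :: v₁, b)
              rw [← h1, ← h2]
              simp
      · have hA : ev i i = 1 := ev_self i
        have hB : ev i' i = 0 := if_neg hii
        have hC : ev i i' = 0 := if_neg (fun hh => hii hh.symm)
        have hD : ev i' i' = 1 := ev_self i'
        have e1 := hpt i
        rw [hA, hB] at e1
        have e2 := hpt i'
        rw [hC, hD] at e2
        have hw0 : Tv w₁ j i = 0 := by
          have q1 := Tv_le_one v₁ b i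
          have q2 := Tv_nonneg w₁ j i
          linarith
        have hv1 : Tv v₁ b i = 1 := by linarith
        have h2 : Tv w₁ j i' = 1 := by
          have q1 := Tv_le_one w₁ j i'
          have q2 := Tv_nonneg v₁ b i'
          linarith
        have hTw : Tv w₁ j = ev i' := Tv_eq_ev_of_one h2
        have hTv : Tv v₁ b = ev i := Tv_eq_ev_of_one hv1
        obtain ⟨hw₁, hj⟩ := Tv_eq_ev w₁ j i' hTw
        obtain ⟨hv₁, hb⟩ := Tv_eq_ev v₁ b i hTv
        right
        subst hj hb
        unfold cSwap
        rw [show (b :: w₁).reverse = List.replicate w₁.length j ++ b :: [] from by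
          rw [List.reverse_cons]
          conv_lhs => rw [hw₁]
          simp [List.reverse_replicate]]
        rw [swAux_replicate_append hii]
        show ((List.replicate w₁.length b ++ j :: []).reverse, b) = (j :: v₁, b)
        rw [show v₁ = List.replicate w₁.length b from by rw [hv₁, hlen']]
        simp [List.reverse_replicate]

/-! ### Tc lemmas -/

lemma Tc_pos : ∀ (w : List F3) (l : F3), 0 < Tc w l
  | [], l => by norm_num
  | i :: w, l => by
      have h1 := Tc_pos w l
      have h2 := ev_nonneg i l
      rw [Tc_cons]
      positivity

lemma Tc_sum : ∀ (w : List F3), ∑ l, Tc w l = 1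
  | [] => by norm_num [Fin.sum_univ_three]
  | i :: w => by
      simp only [Tc_cons]
      rw [← Finset.sum_div, Finset.sum_add_distrib, ev_sum, Tc_sum w]
      norm_num

lemma Tc_lt_one (w : List F3) (l : F3) : Tc w l < 1 := by
  have h := Tc_sum w
  rw [Fin.sum_univ_three] at h
  have h0 := Tc_pos w 0
  have h1 := Tc_pos w 1
  have h2 := Tc_pos w 2
  fin_cases l <;> simp_all <;> linarith

lemma Tc_inj : ∀ (w v : List F3), w.length = v.length → Tc w = Tc v → w = v
  | [], [], _, _ => rfl
  | [], _ :: _, hlen, _ => by simp at hlen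
  | _ :: _, [], hlen, _ => by simp at hlen
  | i :: w, i' :: v, hlen, h => by
      have hlen' : w.length = v.length := by simpa using hlen
      have hpt : ∀ l, ev i l + Tc w l = ev i' l + Tc v l := by
        intro l
        have h2 := congrFun h l
        rw [Tc_cons, Tc_cons] at h2
        linarith
      have hii : i = i' := by
        by_contra hne
        have hB : ev i' i = 0 := if_neg hne
        have e1 := hpt i
        rw [ev_self, hB] at e1
        have q1 := Tc_lt_one v i
        have q2 := Tc_pos w i
        linarith
      subst hii
      have htc : Tc w = Tc v := by
        funext l; have h2 := hpt l; linarith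
      rw [Tc_inj w v hlen' htc]

lemma Tv_dyadic : ∀ (w : List F3) (j l : F3), ∃ z : ℕ, Tv w j l * 2 ^ w.length = z
  | [], j, l => by
      refine ⟨if l = j then 1 else 0, ?_⟩
      unfold Tv ev
      split <;> norm_num
  | i :: w, j, l => by
      obtain ⟨z, hz⟩ := Tv_dyadic w j l
      refine ⟨(if l = i then 1 else 0) * 2 ^ w.length + z, ?_⟩
      rw [Tv_cons]
      push_cast
      rw [← hz]
      unfold ev
      rw [List.length_cons]
      split <;> ring

lemma Tc_third : ∀ (w : List F3) (l : F3), ∃ z : ℕ, Tc w l * (3 * 2 ^ w.length) = 3 * z + 1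
  | [], l => ⟨0, by norm_num⟩
  | i :: w, l => by
      obtain ⟨z, hz⟩ := Tc_third w l
      refine ⟨(if l = i then 1 else 0) * 2 ^ w.length + z, ?_⟩
      rw [Tc_cons, List.length_cons, pow_succ]
      push_cast
      unfold ev
      split <;> nlinarith [hz]

lemma Tc_ne_Tv {w v : List F3} (hlen : w.length = v.length) (j : F3) : Tc w ≠ Tv v j := by
  intro h
  obtain ⟨z, hz⟩ := Tc_third w 0
  obtain ⟨z', hz'⟩ := Tv_dyadic v j 0
  rw [congrFun h 0] at hz
  rw [← hlen] at hz'
  have h3 : (3 * z + 1 : ℝ) = 3 * z' := by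
    rw [← hz]
    rw [show Tv v j 0 * (3 * 2 ^ w.length) = Tv v j 0 * 2 ^ w.length * 3 from by ring, hz']
    ring
  have h4 : (3 * z + 1 : ℤ) = 3 * z' := by exact_mod_cast h3
  omega

/-! ### Geometry bridge -/

def bary (p : Fin 3 → Pt) (v : F3 → ℝ) : Pt := ∑ l, v l • p l

lemma bary_ev (p : Fin 3 → Pt) (j : F3) : bary p (ev j) = p j := by
  unfold bary ev
  rw [Fin.sum_univ_three]
  fin_cases j <;> simp

lemma bary_smul_add (p : Fin 3 → Pt) (a b : F3 → ℝ) (c : ℝ) :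
    c • (bary p a + bary p b) = bary p (fun l => c * (a l + b l)) := by
  unfold bary
  rw [← Finset.sum_add_distrib, Finset.smul_sum]
  apply Finset.sum_congr rfl
  intro l _
  rw [← add_smul, smul_smul]

lemma Fmap_bary (p : Fin 3 → Pt) (i : F3) (v : F3 → ℝ) :
    Fmap p i (bary p v) = bary p (fun l => (ev i l + v l) / 2) := by
  unfold Fmap
  rw [midpoint_eq_smul_add, invOf_eq_inv, ← bary_ev p i, bary_smul_add]
  congr 1
  funext l
  ring

lemma Fw_corner (p : Fin 3 → Pt) : ∀ (w : List F3) (j : F3),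
    Fw p w (p j) = bary p (Tv w j)
  | [], j => (bary_ev p j).symm
  | i :: w, j => by
      show Fmap p i (Fw p w (p j)) = _
      rw [Fw_corner p w j, Fmap_bary]
      rfl

lemma cent_bary (p : Fin 3 → Pt) : cent p = bary p (Tc []) := by
  unfold cent bary
  rw [Fin.sum_univ_three]
  simp only [Tc_nil]
  rw [smul_add, smul_add]
  norm_num

lemma Fw_cent (p : Fin 3 → Pt) : ∀ (w : List F3),
    Fw p w (cent p) = bary p (Tc w)
  | [] => cent_bary p
  | i :: w => by
      show Fmap p i (Fw p w (cent p)) = _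
      rw [Fw_cent p w, Fmap_bary]
      rfl

lemma bary_inj {p : Fin 3 → Pt} (hp : AffineIndependent ℝ p) {u v : F3 → ℝ}
    (hu : ∑ l, u l = 1) (hv : ∑ l, v l = 1) (h : bary p u = bary p v) : u = v := by
  have key := affineIndependent_iff.1 hp Finset.univ (fun l => u l - v l)
    (by rw [Finset.sum_sub_distrib, hu, hv]; ring)
    (by
      have : ∑ l, (u l - v l) • p l = bary p u - bary p v := by
        unfold bary
        rw [← Finset.sum_sub_distrib]
        congr 1
        funext l
        rw [sub_smul]
      rw [this, h, sub_self])
  funext l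
  have h5 : u l - v l = 0 := key l (Finset.mem_univ l)
  linarith

section Bridge

variable {p : Fin 3 → Pt}

lemma corner_eq_iff (hp : AffineIndependent ℝ p) {w v : List F3} {j k : F3} :
    Fw p w (p j) = Fw p v (p k) ↔ Tv w j = Tv v k := by
  rw [Fw_corner, Fw_corner]
  constructor
  · intro h
    exact bary_inj hp (Tv_sum w j) (Tv_sum v k) h
  · intro h; rw [h]

lemma cent_eq_iff (hp : AffineIndependent ℝ p) {w v : List F3} :
    Fw p w (cent p) = Fw p v (cent p) ↔ Tc w = Tc v := by
  rw [Fw_cent, Fw_cent]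
  constructor
  · intro h
    exact bary_inj hp (Tc_sum w) (Tc_sum v) h
  · intro h; rw [h]

lemma cent_inj (hp : AffineIndependent ℝ p) {w v : List F3} (hlen : w.length = v.length)
    (h : Fw p w (cent p) = Fw p v (cent p)) : w = v :=
  Tc_inj w v hlen ((cent_eq_iff hp).1 h)

lemma cent_ne_corner (hp : AffineIndependent ℝ p) {w v : List F3} (hlen : w.length = v.length) (j : F3) :
    Fw p w (cent p) ≠ Fw p v (p j) := by
  intro h
  rw [Fw_cent, Fw_corner] at h
  exact Tc_ne_Tv hlen j (bary_inj hp (Tc_sum w) (Tv_sum v j) h)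

lemma corner_mem_range_iff (hp : AffineIndependent ℝ p) {w : List F3} {j : F3} :
    Fw p w (p j) ∈ Set.range p ↔ w = List.replicate w.length j := by
  constructor
  · rintro ⟨l, hl⟩
    have h : Tv w j = ev l := by
      have h2 : Fw p w (p j) = Fw p ([] : List F3) (p l) := hl.symm
      have := (corner_eq_iff hp).1 h2
      simpa using this
    obtain ⟨hw, hj⟩ := Tv_eq_ev w j l h
    rw [← hj] at hw
    exact hw
  · intro h
    refine ⟨j, ?_⟩
    have : Tv w j = ev j := by conv_lhs => rw [h, Tv_replicate]
    rw [Fw_corner, this, bary_ev]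

end Bridge

/-! ### Graph structure -/

def Xp (p : Fin 3 → Pt) (w : List F3) (j : F3) : Pt := Fw p w (p j)

def Cp (p : Fin 3 → Pt) (w : List F3) : Pt := Fw p w (cent p)

def Uf (p : Fin 3 → Pt) (f : Pt → ℝ) (w : List F3) (j : F3) : ℝ :=
  ∑ b ∈ Finset.univ.erase j, (f (Xp p w b) - f (Xp p w j))

def gJ (p : Fin 3 → Pt) (n : ℕ) (f : Pt → ℝ) : Pt → ℝ :=
  fun x => 3⁻¹ * ∑ᶠ z ∈ {z | adjJ p n x z}, f z

def fJ (p : Fin 3 → Pt) (n : ℕ) (g : Pt → ℝ) : Pt → ℝ :=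
  fun x => (if x ∈ Set.range p then (1:ℝ) else 2)⁻¹ * ∑ᶠ z ∈ {z | adjJ p n x z}, g z

section Graph

variable {p : Fin 3 → Pt} {n : ℕ}

lemma corner_inj (hp : AffineIndependent ℝ p) {w : List F3} {a b : F3}
    (h : Xp p w a = Xp p w b) : a = b := by
  have htv := (corner_eq_iff hp).1 h
  rcases Tv_eq_cases w w rfl a b htv with heq | hsw
  · exact congrArg Prod.snd heq
  · have h1 : (cSwap w a).1 = w := by rw [hsw]
    have h2 := cSwap_fst_eq_iff h1
    rw [h2] at hsw
    exact congrArg Prod.snd hsw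

lemma cSwap_point (hp : AffineIndependent ℝ p) (w : List F3) (j : F3) :
    Xp p (cSwap w j).1 (cSwap w j).2 = Xp p w j :=
  (corner_eq_iff hp).2 (Tv_cSwap w j)

lemma mem_range_iff_cSwap (hp : AffineIndependent ℝ p) (w : List F3) (j : F3) :
    Xp p w j ∈ Set.range p ↔ cSwap w j = (w, j) := by
  rw [show (Xp p w j ∈ Set.range p ↔ w = List.replicate w.length j) from
    corner_mem_range_iff hp, ← cSwap_eq_self_iff]

lemma adjG_set (hp : AffineIndependent ℝ p) {w : List F3} (hw : w.length = n) (j : F3) :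
    {y | adjG p n (Xp p w j) y} =
      ↑(((Finset.univ.erase j).image (fun b => Xp p w b)) ∪
        ((Finset.univ.erase (cSwap w j).2).image (fun b => Xp p (cSwap w j).1 b))) := by
  ext y
  simp only [Set.mem_setOf_eq, Finset.coe_union, Set.mem_union, Finset.coe_image,
    Set.mem_image, Finset.mem_coe, Finset.mem_erase, Finset.mem_univ, and_true]
  constructor
  · rintro ⟨hne, v, hv, a, b, hxa, hyb⟩
    have hcase := Tv_eq_cases w v (by rw [hw, hv]) j a
      ((corner_eq_iff hp).1 (show Xp p w j = Xp p v a from hxa))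
    rcases hcase with heq | hsw
    · have h1 : w = v := congrArg Prod.fst heq
      have h2 : j = a := congrArg Prod.snd heq
      left
      refine ⟨b, ?_, by rw [h1]; exact hyb.symm⟩
      intro hbj
      apply hne
      rw [hxa, hyb, hbj, h2]
    · right
      refine ⟨b, ?_, ?_⟩
      · intro hba
        have h2 : (cSwap w j).2 = a := by rw [hsw]
        rw [h2] at hba
        subst hba
        exact hne (hxa.trans hyb.symm)
      · have h1 : (cSwap w j).1 = v := by rw [hsw]
        rw [h1]
        exact hyb.symm
  · rintro (⟨b, hbj, hby⟩ | ⟨b, hbj, hby⟩)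
    · refine ⟨?_, w, hw, j, b, rfl, hby.symm⟩
      intro h
      rw [← hby] at h
      exact hbj (corner_inj hp (show Xp p w j = Xp p w b from h)).symm
    · refine ⟨?_, (cSwap w j).1, by rw [cSwap_length, hw], (cSwap w j).2, b,
        (cSwap_point hp w j).symm, hby.symm⟩
      intro h
      rw [← hby, ← cSwap_point hp w j] at h
      exact hbj (corner_inj hp h).symm

lemma lapG_eval (hp : AffineIndependent ℝ p) {w : List F3} (hw : w.length = n)
    (j : F3) (f : Pt → ℝ) :
    lapG p n f (Xp p w j) =
      4⁻¹ * (Uf p f w j + Uf p f (cSwap w j).1 (cSwap w j).2) := by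
  have hinj1 : ∀ x ∈ Finset.univ.erase j, ∀ y ∈ Finset.univ.erase j,
      Xp p w x = Xp p w y → x = y := fun x _ y _ h => corner_inj hp h
  unfold lapG
  rw [adjG_set hp hw j, finsum_mem_coe_finset]
  rcases cSwap_dichotomy w j with hid | hne
  · have h1 : (cSwap w j).1 = w := by rw [hid]
    have h2 : (cSwap w j).2 = j := by rw [hid]
    have hrange : Xp p w j ∈ Set.range p := (mem_range_iff_cSwap hp w j).2 hid
    rw [if_pos hrange, h1, h2, Finset.union_self, Finset.sum_image hinj1]
    unfold Uf
    ring
  · have hinj2 : ∀ x ∈ Finset.univ.erase (cSwap w j).2, ∀ y ∈ Finset.univ.erase (cSwap w j).2,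
        Xp p (cSwap w j).1 x = Xp p (cSwap w j).1 y → x = y := fun x _ y _ h => corner_inj hp h
    have hrange : Xp p w j ∉ Set.range p := by
      intro h
      have h2 := (mem_range_iff_cSwap hp w j).1 h
      rw [h2] at hne
      exact hne rfl
    rw [if_neg hrange]
    have hdisj : Disjoint ((Finset.univ.erase j).image (fun b => Xp p w b))
        ((Finset.univ.erase (cSwap w j).2).image (fun b => Xp p (cSwap w j).1 b)) := by
      rw [Finset.disjoint_left]
      intro y hy1 hy2
      rw [Finset.mem_image] at hy1 hy2
      obtain ⟨b, hb, hby⟩ := hy1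
      obtain ⟨b', hb', hby'⟩ := hy2
      rw [Finset.mem_erase] at hb hb'
      have heq : Xp p w b = Xp p (cSwap w j).1 b' := by rw [hby, hby']
      have hcase := Tv_eq_cases w (cSwap w j).1 (by rw [cSwap_length]) b b'
        ((corner_eq_iff hp).1 heq)
      rcases hcase with heq2 | hsw2
      · have h3 : w = (cSwap w j).1 := congrArg Prod.fst heq2
        exact hne h3.symm
      · have h3 : (cSwap w j).1 = (cSwap w b).1 := by rw [hsw2]
        exact hb.1 (cSwap_cell_inj h3 hne).symm
    rw [Finset.sum_union hdisj, Finset.sum_image hinj1, Finset.sum_image hinj2]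
    unfold Uf
    rw [cSwap_point hp w j]

lemma adjJ_center_set (hp : AffineIndependent ℝ p) {w : List F3} (hw : w.length = n) :
    {z | adjJ p n (Cp p w) z} = ↑(Finset.univ.image (fun j => Xp p w j)) := by
  ext z
  simp only [Set.mem_setOf_eq, Finset.coe_image, Set.mem_image, Finset.mem_coe,
    Finset.mem_univ, true_and]
  constructor
  · rintro ⟨v, hv, i, (⟨h1, h2⟩ | ⟨h1, h2⟩)⟩
    · have hwv := cent_inj hp (hw.trans hv.symm) h1
      exact ⟨i, by rw [hwv]; exact h2.symm⟩
    · exact absurd h2 (cent_ne_corner hp (hw.trans hv.symm) i)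
  · rintro ⟨i, hi⟩
    exact ⟨w, hw, i, Or.inl ⟨rfl, hi.symm⟩⟩

lemma adjJ_corner_set (hp : AffineIndependent ℝ p) {w : List F3} (hw : w.length = n)
    (j : F3) :
    {z | adjJ p n (Xp p w j) z} = ↑({Cp p w, Cp p (cSwap w j).1} : Finset Pt) := by
  ext z
  simp only [Set.mem_setOf_eq, Finset.coe_insert, Set.mem_insert_iff, Finset.coe_singleton,
    Set.mem_singleton_iff]
  constructor
  · rintro ⟨v, hv, i, (⟨h1, h2⟩ | ⟨h1, h2⟩)⟩
    · exact absurd h1.symm (cent_ne_corner hp (hv.trans hw.symm) j)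
    · have hcase := Tv_eq_cases w v (by rw [hw, hv]) j i
        ((corner_eq_iff hp).1 h2)
      rcases hcase with heq | hsw
      · have h3 : w = v := congrArg Prod.fst heq
        left
        rw [h1, ← h3]
        exact rfl
      · have h3 : (cSwap w j).1 = v := by rw [hsw]
        right
        rw [h1, ← h3]
        exact rfl
  · intro h
    rcases h with h | h
    · exact ⟨w, hw, j, Or.inr ⟨h, rfl⟩⟩
    · exact ⟨(cSwap w j).1, by rw [cSwap_length, hw], (cSwap w j).2,
        Or.inr ⟨h, (cSwap_point hp w j).symm⟩⟩

lemma adjH_set (hp : AffineIndependent ℝ p) {w : List F3} (hw : w.length = n) :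
    {y | adjH p n (Cp p w) y} =
      ↑((Finset.univ.filter (fun j => (cSwap w j).1 ≠ w)).image
        (fun j => Cp p (cSwap w j).1)) := by
  ext y
  simp only [Set.mem_setOf_eq, Finset.coe_image, Set.mem_image, Finset.mem_coe,
    Finset.mem_filter, Finset.mem_univ, true_and]
  constructor
  · rintro ⟨hne, _, ⟨v, hv, rfl⟩, z, hz1, hz2⟩
    -- y = Cp p v ; hz1 : adjJ (Cp w) z ; hz2 : adjJ (Cp v) z
    have hz1' : z ∈ {z | adjJ p n (Cp p w) z} := hz1
    rw [adjJ_center_set hp hw] at hz1'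
    rw [Finset.coe_image] at hz1'
    obtain ⟨j, _, hj⟩ := hz1'
    have hj' : Xp p w j = z := hj
    have hz2' : z ∈ {z | adjJ p n (Cp p v) z} := hz2
    rw [adjJ_center_set hp hv] at hz2'
    rw [Finset.coe_image] at hz2'
    obtain ⟨k, _, hk⟩ := hz2'
    have hk' : Xp p v k = z := hk
    have heq : Xp p w j = Xp p v k := by rw [hj', hk']
    have hcase := Tv_eq_cases w v (by rw [hw, hv]) j k ((corner_eq_iff hp).1 heq)
    rcases hcase with heq2 | hsw
    · have h1 : w = v := congrArg Prod.fst heq2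
      exact absurd (by rw [h1] : Cp p w = Cp p v) hne
    · have h1 : (cSwap w j).1 = v := by rw [hsw]
      refine ⟨j, ?_, by rw [h1]; exact rfl⟩
      intro hcc
      rw [hcc] at h1
      exact hne (by rw [h1] : Cp p w = Cp p v)
  · rintro ⟨j, hj, hy⟩
    have hlen' : (cSwap w j).1.length = n := by rw [cSwap_length, hw]
    refine ⟨?_, ⟨w, hw, rfl⟩, ⟨(cSwap w j).1, hlen', hy.symm⟩, Xp p w j,
      ⟨w, hw, j, Or.inl ⟨rfl, rfl⟩⟩,
      ⟨(cSwap w j).1, hlen', (cSwap w j).2, Or.inl ⟨hy.symm, (cSwap_point hp w j).symm⟩⟩⟩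
    intro hcc
    rw [← hy] at hcc
    exact hj (cent_inj hp (by rw [hw, hlen']) hcc).symm

lemma lapH_eval (hp : AffineIndependent ℝ p) {w : List F3} (hw : w.length = n)
    (g : Pt → ℝ) :
    lapH p n g (Cp p w) = 3⁻¹ * ∑ j : F3, (g (Cp p (cSwap w j).1) - g (Cp p w)) := by
  unfold lapH
  rw [adjH_set hp hw, finsum_mem_coe_finset]
  have hinj : ∀ a ∈ Finset.univ.filter (fun j => (cSwap w j).1 ≠ w),
      ∀ b ∈ Finset.univ.filter (fun j => (cSwap w j).1 ≠ w),
      Cp p (cSwap w a).1 = Cp p (cSwap w b).1 → a = b := by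
    intro a ha b hb h
    rw [Finset.mem_filter] at ha hb
    have h2 := cent_inj hp (by rw [cSwap_length, cSwap_length]) h
    exact cSwap_cell_inj h2 ha.2
  rw [Finset.sum_image hinj]
  congr 1
  apply Finset.sum_subset (Finset.filter_subset _ _)
  intro b _ hb
  rw [Finset.mem_filter] at hb
  push_neg at hb
  have h1 : (cSwap w b).1 = w := hb (Finset.mem_univ b)
  rw [h1, sub_self]

lemma gJ_eval (hp : AffineIndependent ℝ p) {w : List F3} (hw : w.length = n)
    (f : Pt → ℝ) :
    gJ p n f (Cp p w) = 3⁻¹ * ∑ j : F3, f (Xp p w j) := by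
  unfold gJ
  rw [adjJ_center_set hp hw, finsum_mem_coe_finset,
    Finset.sum_image (fun a _ b _ h => corner_inj hp h)]

lemma fJ_eval (hp : AffineIndependent ℝ p) {w : List F3} (hw : w.length = n)
    (j : F3) (g : Pt → ℝ) :
    2 * fJ p n g (Xp p w j) = g (Cp p w) + g (Cp p (cSwap w j).1) := by
  unfold fJ
  rw [adjJ_corner_set hp hw j, finsum_mem_coe_finset]
  rcases cSwap_dichotomy w j with hid | hne
  · have h1 : (cSwap w j).1 = w := by rw [hid]
    have hrange : Xp p w j ∈ Set.range p := (mem_range_iff_cSwap hp w j).2 hid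
    rw [if_pos hrange, h1, show ({Cp p w, Cp p w} : Finset Pt) = {Cp p w} from
      Finset.insert_eq_self.2 (Finset.mem_singleton_self _), Finset.sum_singleton]
    ring
  · have hrange : Xp p w j ∉ Set.range p := by
      intro h
      have h2 := (mem_range_iff_cSwap hp w j).1 h
      rw [h2] at hne
      exact hne rfl
    have hcc : Cp p w ≠ Cp p (cSwap w j).1 := by
      intro h
      exact hne (cent_inj hp (by rw [cSwap_length]) h).symm
    rw [if_neg hrange, Finset.sum_pair hcc]
    ring

/-! ### Spectral computations -/

lemma sum_const3 (c : ℝ) : ∑ _b : F3, c = 3 * c := by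
  rw [Fin.sum_univ_three]; ring

lemma Uf_eq (f : Pt → ℝ) (w : List F3) (j : F3) :
    Uf p f w j = (∑ b, f (Xp p w b)) - 3 * f (Xp p w j) := by
  unfold Uf
  rw [Finset.sum_sub_distrib]
  have h1 : ∑ b ∈ Finset.univ.erase j, f (Xp p w b) = (∑ b, f (Xp p w b)) - f (Xp p w j) := by
    rw [← Finset.sum_erase_add Finset.univ (fun b => f (Xp p w b)) (Finset.mem_univ j)]
    ring
  have h2 : ∑ _b ∈ Finset.univ.erase j, f (Xp p w j) = 2 * f (Xp p w j) := by
    rw [Finset.sum_const, Finset.card_erase_of_mem (Finset.mem_univ j), Finset.card_univ,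
      Fintype.card_fin]
    rw [show (3 - 1 : ℕ) = 2 from rfl]
    rw [nsmul_eq_mul]
    norm_num
  rw [h1, h2]
  ring

lemma star2 (hp : AffineIndependent ℝ p) {z : ℝ} {f : Pt → ℝ}
    (hf : ∀ x ∈ VG p n, lapG p n f x = z * f x)
    {w : List F3} (hw : w.length = n) (j : F3) :
    gJ p n f (Cp p (cSwap w j).1) + gJ p n f (Cp p w) = (2 + 4 * z / 3) * f (Xp p w j) := by
  have hmem : Xp p w j ∈ VG p n := ⟨w, hw, j, rfl⟩
  have heig := hf _ hmem
  rw [lapG_eval hp hw j f, Uf_eq, Uf_eq, cSwap_point hp w j] at heig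
  have h1 : ∑ b, f (Xp p w b) = 3 * gJ p n f (Cp p w) := by
    rw [gJ_eval hp hw f]; ring
  have h2 : ∑ b, f (Xp p (cSwap w j).1 b) = 3 * gJ p n f (Cp p (cSwap w j).1) := by
    rw [gJ_eval hp (show (cSwap w j).1.length = n by rw [cSwap_length, hw]) f]; ring
  rw [h1, h2] at heig
  linarith

lemma forward (hp : AffineIndependent ℝ p) {z : ℝ} (hz : z ∈ specG p n)
    (hz2 : z ≠ -(3/2)) : (4 / 3 * z) ∈ specH p n := by
  obtain ⟨f, ⟨x₀, hx₀, hf0⟩, hf⟩ := hz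
  have hlam : (2 + 4 * z / 3) ≠ 0 := by
    intro h; apply hz2; linarith
  refine ⟨gJ p n f, ?_, ?_⟩
  · by_contra hcon
    push_neg at hcon
    obtain ⟨w₀, hw₀, j₀, hxx⟩ := hx₀
    subst hxx
    have hstar := star2 hp hf hw₀ j₀
    have hv1 : gJ p n f (Cp p (cSwap w₀ j₀).1) = 0 :=
      hcon _ ⟨(cSwap w₀ j₀).1, by rw [cSwap_length, hw₀], rfl⟩
    have hv2 : gJ p n f (Cp p w₀) = 0 := hcon _ ⟨w₀, hw₀, rfl⟩
    rw [hv1, hv2] at hstar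
    have hprod : (2 + 4 * z / 3) * f (Xp p w₀ j₀) = 0 := by linarith
    rcases mul_eq_zero.1 hprod with h | h
    · exact hlam h
    · exact hf0 h
  · intro x hx
    obtain ⟨w, hw, hxx⟩ := hx
    subst hxx
    rw [show Fw p w (cent p) = Cp p w from rfl]
    rw [lapH_eval hp hw]
    have hkey : ∀ j : F3, gJ p n f (Cp p (cSwap w j).1) - gJ p n f (Cp p w)
        = (2 + 4 * z / 3) * f (Xp p w j) - 2 * gJ p n f (Cp p w) := by
      intro j
      have := star2 hp hf hw j
      linarith
    rw [Finset.sum_congr rfl (fun j _ => hkey j), Finset.sum_sub_distrib,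
      ← Finset.mul_sum, sum_const3]
    have h1 : ∑ b, f (Xp p w b) = 3 * gJ p n f (Cp p w) := by
      rw [gJ_eval hp hw f]; ring
    rw [h1]
    ring

lemma ddagger (hp : AffineIndependent ℝ p) {η : ℝ} {g : Pt → ℝ}
    (hg : ∀ x ∈ VH p n, lapH p n g x = η * g x)
    {w : List F3} (hw : w.length = n) :
    ∑ b, fJ p n g (Xp p w b) = 3 / 2 * (η + 2) * g (Cp p w) := by
  have heig := hg (Cp p w) ⟨w, hw, rfl⟩
  rw [lapH_eval hp hw g] at heig
  have h2 : ∑ b : F3, (2 * fJ p n g (Xp p w b))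
      = ∑ b : F3, (g (Cp p w) + g (Cp p (cSwap w b).1)) :=
    Finset.sum_congr rfl (fun b _ => fJ_eval hp hw b g)
  rw [← Finset.mul_sum, Finset.sum_add_distrib, sum_const3] at h2
  have h3 : ∑ b : F3, (g (Cp p (cSwap w b).1) - g (Cp p w)) = 3 * (η * g (Cp p w)) := by
    have h30 : (3:ℝ)⁻¹ * ∑ b : F3, (g (Cp p (cSwap w b).1) - g (Cp p w)) = η * g (Cp p w) :=
      heig
    linarith
  rw [Finset.sum_sub_distrib, sum_const3] at h3
  linarith

lemma backward_eig (hp : AffineIndependent ℝ p) {η : ℝ} {g : Pt → ℝ}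
    (hg : ∀ x ∈ VH p n, lapH p n g x = η * g x)
    {w : List F3} (hw : w.length = n) (j : F3) :
    lapG p n (fJ p n g) (Xp p w j) = (3 * η / 4) * fJ p n g (Xp p w j) := by
  rw [lapG_eval hp hw j, Uf_eq, Uf_eq, cSwap_point hp w j]
  have h1 := ddagger hp hg hw
  have h2 := ddagger hp hg (show (cSwap w j).1.length = n by rw [cSwap_length, hw])
  have h3 := fJ_eval hp hw j g
  rw [h1, h2]
  linear_combination (-(3:ℝ)/8) * (η + 2) * h3

lemma backward (hp : AffineIndependent ℝ p) {η : ℝ} (hη : η ∈ specH p n)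
    (hη2 : η ≠ -2) : (3 * η / 4) ∈ specG p n := by
  obtain ⟨g, ⟨x₀, hx₀, hg0⟩, hg⟩ := hη
  refine ⟨fJ p n g, ?_, ?_⟩
  · by_contra hcon
    push_neg at hcon
    obtain ⟨w₀, hw₀, hxx⟩ := hx₀
    subst hxx
    have h1 := ddagger hp hg hw₀
    have h2 : ∀ b, fJ p n g (Xp p w₀ b) = 0 := fun b => hcon _ ⟨w₀, hw₀, b, rfl⟩
    rw [Finset.sum_eq_zero (fun b _ => h2 b)] at h1
    rcases mul_eq_zero.1 h1.symm with h | h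
    · have : η = -2 := by
        rcases mul_eq_zero.1 h with h' | h'
        · norm_num at h'
        · linarith
      exact hη2 this
    · exact hg0 h
  · intro x hx
    obtain ⟨w, hw, j, hxx⟩ := hx
    subst hxx
    exact backward_eig hp hg hw j

end Graph

end SGH

/-- `ζ ↦ (4/3)ζ` is a bijection from `σ(Δ^G_n) \ {-3/2}` onto `σ(Δ^H_n) \ {-2}`. -/
theorem spec_bijection (p : Fin 3 → Pt) (hp : AffineIndependent ℝ p) (n : ℕ) :
    Set.BijOn (fun z : ℝ => 4 / 3 * z)
      (specG p n \ {-3/2}) (specH p n \ {-2}) := by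
  refine ⟨?_, ?_, ?_⟩
  · rintro z ⟨hz, hz2⟩
    rw [Set.mem_singleton_iff] at hz2
    refine ⟨SGH.forward hp hz (by intro h; apply hz2; rw [h]; norm_num), ?_⟩
    rw [Set.mem_singleton_iff]
    intro h
    apply hz2
    have : z = -3/2 := by linarith [h]
    exact this
  · intro a _ b _ h
    exact mul_left_cancel₀ (by norm_num : (4/3 : ℝ) ≠ 0) h
  · rintro η ⟨hη, hη2⟩
    rw [Set.mem_singleton_iff] at hη2
    refine ⟨3 * η / 4, ⟨SGH.backward hp hη hη2, ?_⟩, ?_⟩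
    · rw [Set.mem_singleton_iff]
      intro h
      apply hη2
      linarith [h]
    · show 4 / 3 * (3 * η / 4) = η
      ring
end
end
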